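/- arXiv:2605.23849 — 9 statements merged into one kernel-verified Lean document; each statement's English description precedes it below -/
import Mathlib

section
/- For all integers 0 < t < k ≤ n, the incidence matrix 𝒜_{n,k,t}, viewed as a matrix over ℚ (or over any field of characteristic 0), has full rank: rank(𝒜_{n,k,t}) = min(binom(n,t), binom(n,k)). -/
/-- The incidence matrix `𝒜_{n,k,t}`: rows indexed by `t`-subsets `T` of `{1,…,n}`,
columns indexed by `k`-subsets `K`, with entry `1` if `T ⊆ K` and `0` otherwise. -/
def incMat (R : Type*) [Zero R] [One R] (n k t : ℕ) :
    Matrix {T : Finset (Fin n) // T.card = t} {K : Finset (Fin n) // K.card = k} R :=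
  fun T K => if T.1 ⊆ K.1 then 1 else 0

open Finset Matrix

/-- The number of `k`-subsets of `Fin n` containing a fixed set `A`. -/
lemma count_supersets (n k : ℕ) (hkn : k ≤ n) (A : Finset (Fin n)) :
    ((Finset.powersetCard k (Finset.univ : Finset (Fin n))).filter (fun K => A ⊆ K)).card
      = (n - A.card).choose (n - k) := by
  have hAn : A.card ≤ n := by
    simpa using Finset.card_le_univ A
  rcases le_or_gt A.card k with h | h
  · have hcard : ((Finset.powersetCard k (Finset.univ : Finset (Fin n))).filter
        (fun K => A ⊆ K)).card = (Finset.powersetCard (k - A.card) Aᶜ).card := by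
      refine Finset.card_bij' (fun K _ => K \ A) (fun S _ => S ∪ A) ?_ ?_ ?_ ?_
      · intro K hK
        simp only [Finset.mem_filter, Finset.mem_powersetCard_univ] at hK
        rw [Finset.mem_powersetCard]
        refine ⟨fun x hx => ?_, ?_⟩
        · simp only [Finset.mem_sdiff] at hx
          simpa using hx.2
        · rw [Finset.card_sdiff_of_subset hK.2, hK.1]
      · intro S hS
        rw [Finset.mem_powersetCard] at hS
        simp only [Finset.mem_filter, Finset.mem_powersetCard_univ]
        constructor
        · rw [Finset.card_union_of_disjoint, hS.2]
          · omega
          · refine Finset.disjoint_left.2 fun x hx hx' => ?_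
            have := hS.1 hx
            simp only [Finset.mem_compl] at this
            exact this hx'
        · exact Finset.subset_union_right
      · intro K hK
        simp only [Finset.mem_filter, Finset.mem_powersetCard_univ] at hK
        exact Finset.sdiff_union_of_subset hK.2
      · intro S hS
        rw [Finset.mem_powersetCard] at hS
        apply Finset.union_sdiff_cancel_right
        refine Finset.disjoint_left.2 fun x hx hx' => ?_
        have := hS.1 hx
        simp only [Finset.mem_compl] at this
        exact this hx'
    rw [hcard, Finset.card_powersetCard, Finset.card_compl, Fintype.card_fin]
    rw [← Nat.choose_symm (show k - A.card ≤ n - A.card by omega)]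
    congr 1
    omega
  · have hempty : ((Finset.powersetCard k (Finset.univ : Finset (Fin n))).filter
        (fun K => A ⊆ K)) = ∅ := by
      refine Finset.eq_empty_of_forall_notMem fun K hK => ?_
      simp only [Finset.mem_filter, Finset.mem_powersetCard_univ] at hK
      have := Finset.card_le_card hK.2
      omega
    rw [hempty]
    simp [Nat.choose_eq_zero_of_lt (show n - A.card < n - k by omega)]

/-- The number of `s`-subsets of a fixed set `B`. -/
lemma count_subsets (n s : ℕ) (B : Finset (Fin n)) :
    ((Finset.powersetCard s (Finset.univ : Finset (Fin n))).filter (fun S => S ⊆ B)).card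
      = B.card.choose s := by
  have : ((Finset.powersetCard s (Finset.univ : Finset (Fin n))).filter (fun S => S ⊆ B))
      = Finset.powersetCard s B := by
    ext S
    simp [Finset.mem_powersetCard, and_comm]
  rw [this, Finset.card_powersetCard]

/-- Vandermonde-type identity. -/
lemma vand (A B t i : ℕ) (hi : i ≤ t) (ht : t ≤ B) :
    (A + i).choose B = ∑ s ∈ Finset.range (t + 1), A.choose (B - s) * i.choose s := by
  rw [add_comm A i, Nat.add_choose_eq,
    Finset.Nat.sum_antidiagonal_eq_sum_range_succ (fun a b => i.choose a * A.choose b) B]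
  rw [← Finset.sum_subset (Finset.range_subset_range.2 (show t + 1 ≤ B + 1 by omega))
      (fun x _ hx => by
        have hx' : ¬ x < t + 1 := by simpa using hx
        rw [Nat.choose_eq_zero_of_lt (show i < x by omega), zero_mul])]
  exact Finset.sum_congr rfl fun s _ => mul_comm _ _

/-- Sum over the subtype of `k`-subsets equals sum over `powersetCard`. -/
lemma sum_subtype_eq (n k : ℕ) (f : Finset (Fin n) → ℚ) :
    (∑ K : {K : Finset (Fin n) // K.card = k}, f K.1)
      = ∑ K ∈ Finset.powersetCard k (Finset.univ : Finset (Fin n)), f K := by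
  rw [← Finset.sum_subtype (Finset.powersetCard k Finset.univ)
      (fun K => Finset.mem_powersetCard_univ) f]

/-- The key identity: `W Wᵀ` is a nonnegative combination of Gram matrices. -/
lemma key_identity (n k t : ℕ) (htk : t ≤ k) (hkn : t + k ≤ n) :
    incMat ℚ n k t * (incMat ℚ n k t)ᵀ
      = ∑ s ∈ Finset.range (t + 1), ((n - 2 * t).choose (n - k - s) : ℚ) •
          ((incMat ℚ n t s)ᵀ * incMat ℚ n t s) := by
  ext T T'
  have hT := T.2
  have hT' := T'.2
  set i := (T.1 ∩ T'.1).card with hi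
  have hcardi : i ≤ t := by
    rw [← hT]
    exact Finset.card_le_card Finset.inter_subset_left
  have hui : (T.1 ∪ T'.1).card + i = 2 * t := by
    rw [hi, Finset.card_union_add_card_inter, hT, hT']
    ring
  have hun : (T.1 ∪ T'.1).card ≤ n := by simpa using Finset.card_le_univ (T.1 ∪ T'.1)
  -- LHS
  have hL : (incMat ℚ n k t * (incMat ℚ n k t)ᵀ) T T'
      = (((n - 2 * t) + i).choose (n - k) : ℚ) := by
    rw [Matrix.mul_apply]
    simp only [incMat, Matrix.transpose_apply]
    have h1 : ∀ K : {K : Finset (Fin n) // K.card = k},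
        (if T.1 ⊆ K.1 then (1 : ℚ) else 0) * (if T'.1 ⊆ K.1 then 1 else 0)
          = if T.1 ∪ T'.1 ⊆ K.1 then 1 else 0 := by
      intro K
      by_cases h1 : T.1 ⊆ K.1 <;> by_cases h2 : T'.1 ⊆ K.1 <;>
        simp [h1, h2, Finset.union_subset_iff]
    rw [Finset.sum_congr rfl fun K _ => h1 K]
    rw [sum_subtype_eq n k (fun K => if T.1 ∪ T'.1 ⊆ K then 1 else 0)]
    rw [Finset.sum_boole]
    rw [count_supersets n k (by omega) (T.1 ∪ T'.1)]
    congr 2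
    omega
  -- RHS entries
  have hR : ∀ s, ((incMat ℚ n t s)ᵀ * incMat ℚ n t s) T T' = (i.choose s : ℚ) := by
    intro s
    rw [Matrix.mul_apply]
    simp only [incMat, Matrix.transpose_apply]
    have h1 : ∀ S : {S : Finset (Fin n) // S.card = s},
        (if S.1 ⊆ T.1 then (1 : ℚ) else 0) * (if S.1 ⊆ T'.1 then 1 else 0)
          = if S.1 ⊆ T.1 ∩ T'.1 then 1 else 0 := by
      intro S
      by_cases h1 : S.1 ⊆ T.1 <;> by_cases h2 : S.1 ⊆ T'.1 <;>
        simp [h1, h2, Finset.subset_inter_iff]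
    rw [Finset.sum_congr rfl fun S _ => h1 S]
    rw [sum_subtype_eq n s (fun S => if S ⊆ T.1 ∩ T'.1 then 1 else 0)]
    rw [Finset.sum_boole]
    rw [count_subsets n s (T.1 ∩ T'.1)]
  rw [hL]
  rw [Matrix.sum_apply]
  simp only [Matrix.smul_apply, smul_eq_mul]
  rw [Finset.sum_congr rfl fun s _ => by rw [hR s]]
  have hv := vand (n - 2 * t) (n - k) t i hcardi (by omega)
  rw [hv]
  push_cast
  rfl

/-- `incMat` with equal row and column sizes is the identity matrix. -/
lemma incMat_self (R : Type*) [Zero R] [One R] (n t : ℕ) :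
    incMat R n t t = 1 := by
  ext T K
  simp only [incMat, Matrix.one_apply]
  congr 1
  simp only [eq_iff_iff]
  constructor
  · intro h
    exact Subtype.ext (Finset.eq_of_subset_of_card_le h (by rw [T.2, K.2]))
  · intro h
    rw [h]

lemma sum_mulVec' {ι m n : Type*} [Fintype n] (S : Finset ι) (A : ι → Matrix m n ℚ)
    (x : n → ℚ) : (∑ s ∈ S, A s) *ᵥ x = ∑ s ∈ S, A s *ᵥ x := by
  ext j
  simp only [Matrix.mulVec, dotProduct, Matrix.sum_apply, Finset.sum_apply, Finset.sum_mul]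
  rw [Finset.sum_comm]

lemma dotProduct_sum' {ι n : Type*} [Fintype n] (S : Finset ι) (v : ι → n → ℚ)
    (x : n → ℚ) : x ⬝ᵥ (∑ s ∈ S, v s) = ∑ s ∈ S, x ⬝ᵥ v s := by
  simp only [dotProduct, Finset.sum_apply, Finset.mul_sum]
  rw [Finset.sum_comm]

lemma dp_self_nonneg {n : Type*} [Fintype n] (v : n → ℚ) : 0 ≤ v ⬝ᵥ v :=
  Finset.sum_nonneg fun i _ => mul_self_nonneg _

/-- The Gram matrix `W Wᵀ` has nonzero determinant over `ℚ`. -/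
lemma gram_det_ne_zero (n k t : ℕ) (htk : t ≤ k) (hkn : t + k ≤ n) :
    (incMat ℚ n k t * (incMat ℚ n k t)ᵀ).det ≠ 0 := by
  rw [Ne, ← Matrix.exists_mulVec_eq_zero_iff]
  push_neg
  intro x hxne hx
  -- 0 = xᵀ M x = ∑ c_s ‖W_s x‖²
  have hq : x ⬝ᵥ (incMat ℚ n k t * (incMat ℚ n k t)ᵀ) *ᵥ x = 0 := by
    rw [hx, dotProduct_zero]
  rw [key_identity n k t htk hkn] at hq
  rw [sum_mulVec', dotProduct_sum'] at hq
  have hterm : ∀ s ∈ Finset.range (t + 1),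
      x ⬝ᵥ (((n - 2 * t).choose (n - k - s) : ℚ) • ((incMat ℚ n t s)ᵀ * incMat ℚ n t s)) *ᵥ x
        = ((n - 2 * t).choose (n - k - s) : ℚ) *
            ((incMat ℚ n t s *ᵥ x) ⬝ᵥ (incMat ℚ n t s *ᵥ x)) := by
    intro s _
    rw [Matrix.smul_mulVec, dotProduct_smul, smul_eq_mul]
    congr 1
    rw [← Matrix.mulVec_mulVec, Matrix.dotProduct_mulVec, Matrix.vecMul_transpose]
  rw [Finset.sum_congr rfl hterm] at hq
  have hnonneg : ∀ s ∈ Finset.range (t + 1),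
      0 ≤ ((n - 2 * t).choose (n - k - s) : ℚ) *
            ((incMat ℚ n t s *ᵥ x) ⬝ᵥ (incMat ℚ n t s *ᵥ x)) := by
    intro s _
    exact mul_nonneg (by positivity) (dp_self_nonneg _)
  have hzero := (Finset.sum_eq_zero_iff_of_nonneg hnonneg).1 hq t (by simp)
  have hct : (0 : ℚ) < ((n - 2 * t).choose (n - k - t) : ℚ) := by
    have h1 : n - k - t ≤ n - 2 * t := by omega
    exact_mod_cast Nat.choose_pos h1
  have hdz : (incMat ℚ n t t *ᵥ x) ⬝ᵥ (incMat ℚ n t t *ᵥ x) = 0 := by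
    rcases mul_eq_zero.1 hzero with h | h
    · exact absurd h (ne_of_gt hct)
    · exact h
  rw [incMat_self, Matrix.one_mulVec] at hdz
  exact hxne (dotProduct_self_eq_zero.1 hdz)

/-- `incMat F` is the image of `incMat ℚ` under the rational cast. -/
lemma incMat_map (F : Type*) [Field F] [CharZero F] (n k t : ℕ) :
    incMat F n k t = (incMat ℚ n k t).map (Rat.castHom F) := by
  ext T K
  simp only [incMat, Matrix.map_apply]
  split_ifs <;> simp

/-- Case A: full row rank when `t + k ≤ n`. -/
lemma rank_incMat_of_add_le (F : Type*) [Field F] [CharZero F] (n k t : ℕ)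
    (htk : t ≤ k) (hkn : t + k ≤ n) :
    (incMat F n k t).rank = n.choose t := by
  have hmap : incMat F n k t * (incMat F n k t)ᵀ
      = (incMat ℚ n k t * (incMat ℚ n k t)ᵀ).map (Rat.castHom F) := by
    rw [Matrix.map_mul, incMat_map F n k t, Matrix.transpose_map]
  have hdet : (incMat F n k t * (incMat F n k t)ᵀ).det ≠ 0 := by
    rw [hmap]
    have hd := RingHom.map_det (Rat.castHom F) (incMat ℚ n k t * (incMat ℚ n k t)ᵀ)
    rw [RingHom.mapMatrix_apply] at hd
    rw [← hd]
    exact Rat.cast_ne_zero.2 (gram_det_ne_zero n k t htk hkn)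
  have hunit : IsUnit (incMat F n k t * (incMat F n k t)ᵀ) :=
    (Matrix.isUnit_iff_isUnit_det _).2 (isUnit_iff_ne_zero.2 hdet)
  have hrank1 : (incMat F n k t * (incMat F n k t)ᵀ).rank
      = Fintype.card {T : Finset (Fin n) // T.card = t} :=
    Matrix.rank_of_isUnit _ hunit
  have hle : (incMat F n k t * (incMat F n k t)ᵀ).rank ≤ (incMat F n k t).rank :=
    Matrix.rank_mul_le_left _ _
  have hge : (incMat F n k t).rank ≤ Fintype.card {T : Finset (Fin n) // T.card = t} :=
    Matrix.rank_le_card_height _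
  have hcard : Fintype.card {T : Finset (Fin n) // T.card = t} = n.choose t := by
    rw [Fintype.card_finset_len, Fintype.card_fin]
  omega

/-- Rank is invariant under reindexing along equivalences (rectangular version). -/
lemma rank_submatrix'' {F : Type*} [Field F] {m n m' n' : Type*}
    [Fintype m] [Fintype n] [Fintype m'] [Fintype n']
    (A : Matrix m n F) (e₁ : m' ≃ m) (e₂ : n' ≃ n) :
    (A.submatrix e₁ e₂).rank = A.rank := by
  rw [Matrix.rank, Matrix.rank, Matrix.mulVecLin_submatrix, LinearMap.range_comp,
    LinearMap.range_comp,
    show LinearMap.funLeft F F ⇑e₂.symm = LinearEquiv.funCongrLeft F F e₂.symm from rfl,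
    LinearEquiv.range, Submodule.map_top,
    show LinearMap.funLeft F F ⇑e₁ = LinearEquiv.funCongrLeft F F e₁ from rfl,
    LinearEquiv.finrank_map_eq]

/-- Complementation equivalence on subsets of fixed size. -/
def complEquiv (n a : ℕ) (han : a ≤ n) :
    {A : Finset (Fin n) // A.card = a} ≃ {B : Finset (Fin n) // B.card = n - a} where
  toFun A := ⟨A.1ᶜ, by rw [Finset.card_compl, Fintype.card_fin, A.2]⟩
  invFun B := ⟨B.1ᶜ, by rw [Finset.card_compl, Fintype.card_fin, B.2]; omega⟩
  left_inv A := Subtype.ext (compl_compl A.1)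
  right_inv B := Subtype.ext (compl_compl B.1)

/-- Transpose-complement symmetry. -/
lemma incMat_rank_compl (F : Type*) [Field F] [CharZero F] (n k t : ℕ)
    (htn : t ≤ n) (hkn : k ≤ n) :
    (incMat F n k t).rank = (incMat F n (n - t) (n - k)).rank := by
  have heq : (incMat F n k t)ᵀ
      = (incMat F n (n - t) (n - k)).submatrix (complEquiv n k hkn) (complEquiv n t htn) := by
    ext K T
    simp only [Matrix.transpose_apply, Matrix.submatrix_apply, incMat, complEquiv,
      Equiv.coe_fn_mk]
    simp [Finset.compl_subset_compl]
  rw [← Matrix.rank_transpose (incMat F n k t), heq,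
    rank_submatrix'' (incMat F n (n - t) (n - k)) (complEquiv n k hkn) (complEquiv n t htn)]

/-- Over a field of characteristic zero, the incidence matrix `𝒜_{n,k,t}` has full
rank `min (binom(n,t), binom(n,k))` for all `0 < t < k ≤ n`. -/
theorem stmt_1 (F : Type*) [Field F] [CharZero F] (n k t : ℕ)
    (ht : 0 < t) (htk : t < k) (hkn : k ≤ n) :
    (incMat F n k t).rank = min (n.choose t) (n.choose k) := by
  rcases le_or_gt (t + k) n with h | h
  · -- rows independent
    have hrank := rank_incMat_of_add_le F n k t (le_of_lt htk) h
    have hle : (incMat F n k t).rank ≤ n.choose k := by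
      have h2 := Matrix.rank_le_card_width (incMat F n k t)
      rwa [Fintype.card_finset_len, Fintype.card_fin] at h2
    rw [hrank, min_eq_left (by omega)]
  · -- columns independent, via complement symmetry
    have hsym := incMat_rank_compl F n k t (by omega) hkn
    have hrank := rank_incMat_of_add_le F n (n - t) (n - k) (by omega) (by omega)
    rw [hsym, hrank]
    have hck : n.choose (n - k) = n.choose k := Nat.choose_symm hkn
    have hle : (incMat F n (n - t) (n - k)).rank ≤ n.choose (n - t) := by
      have h2 := Matrix.rank_le_card_width (incMat F n (n - t) (n - k))
      rwa [Fintype.card_finset_len, Fintype.card_fin] at h2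
    rw [hrank] at hle
    have hct : n.choose (n - t) = n.choose t := Nat.choose_symm (by omega)
    rw [hct] at hle
    rw [hck] at hle ⊢
    rw [min_eq_right hle]
end

section
/- Let t ≤ n be nonnegative integers and let f be a real-valued function on the subsets of {1,…,n} that is a null t-design and is not identically zero. Then the positive support of f has cardinality at least 2^t: |{F ⊆ {1,…,n} : f(F) > 0}| ≥ 2^t. -/
/-!
Induct on the ground set. Removing a point `i` splits `f` into `f₀` (the sets avoiding `i`) and
`f₁ G = f (G ∪ {i})`. For a null `(t+1)`-design both are null `t`-designs on the smaller ground
set and `f₀ + f₁` is a null `(t+1)`-design there. If `f₀` and `f₁` are both nonzero, their positive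
supports contribute `2^t + 2^t`; if one of them vanishes, the other equals `f₀ + f₁` and the
induction applies with `t + 1` itself. For `t = 0`, a nonzero function with total sum zero takes
a positive value.
-/

open Finset

variable {α R : Type*} [DecidableEq α]

section AddCommMonoid

variable [AddCommMonoid R]

def IsNullDesign (S : Finset α) (t : ℕ) (f : Finset α → R) : Prop :=
  ∀ X ⊆ S, #X ≤ t → ∑ F ∈ S.powerset with X ⊆ F, f F = 0

namespace IsNullDesign

variable {S : Finset α} {s t : ℕ} {f g : Finset α → R}

theorem mono (h : IsNullDesign S t f) (hst : s ≤ t) : IsNullDesign S s f :=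
  fun X hX hXs => h X hX (hXs.trans hst)

theorem congr (h : IsNullDesign S t f) (hfg : ∀ F ∈ S.powerset, f F = g F) :
    IsNullDesign S t g := fun X hX hXt => by
  rw [← h X hX hXt]
  exact sum_congr rfl fun F hF => (hfg F (mem_filter.1 hF).1).symm

end IsNullDesign

theorem sum_powerset_insert_filter_superset {S X : Finset α} {i : α} (hi : i ∉ S) (hX : X ⊆ S)
    (f : Finset α → R) :
    ∑ F ∈ (insert i S).powerset with X ⊆ F, f F =
      ∑ G ∈ S.powerset with X ⊆ G, (f G + f (insert i G)) := by
  have hiX : i ∉ X := fun h => hi (hX h)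
  simp only [sum_filter, sum_powerset_insert hi, subset_insert_iff_of_notMem hiX, ← sum_add_distrib,
    ite_add_ite, add_zero]

theorem sum_powerset_insert_filter_insert_superset {S X : Finset α} {i : α} (hi : i ∉ S)
    (hX : X ⊆ S) (f : Finset α → R) :
    ∑ F ∈ (insert i S).powerset with insert i X ⊆ F, f F =
      ∑ G ∈ S.powerset with X ⊆ G, f (insert i G) := by
  have hiX : i ∉ X := fun h => hi (hX h)
  rw [sum_filter, sum_powerset_insert hi, sum_filter, sum_eq_zero, zero_add]
  · simp only [insert_subset_insert_iff hiX]
  · exact fun G hG => if_neg fun h => hi (mem_powerset.1 hG (h (mem_insert_self i X)))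

namespace IsNullDesign

variable {S : Finset α} {t : ℕ} {f : Finset α → R} {i : α}

theorem add_comp_insert (hi : i ∉ S) (h : IsNullDesign (insert i S) t f) :
    IsNullDesign S t (fun G => f G + f (insert i G)) := fun X hX hXt => by
  rw [← sum_powerset_insert_filter_superset hi hX]
  exact h X (hX.trans (subset_insert i S)) hXt

theorem comp_insert (hi : i ∉ S) (h : IsNullDesign (insert i S) (t + 1) f) :
    IsNullDesign S t (fun G => f (insert i G)) := fun X hX hXt => by
  rw [← sum_powerset_insert_filter_insert_superset hi hX]
  exact h _ (insert_subset_insert i hX) ((card_insert_le i X).trans (by omega))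

end IsNullDesign

end AddCommMonoid

namespace IsNullDesign

variable [AddCommGroup R] {S : Finset α} {t : ℕ} {f g : Finset α → R} {i : α}

theorem sub (hf : IsNullDesign S t f) (hg : IsNullDesign S t g) :
    IsNullDesign S t (fun F => f F - g F) := fun X hX hXt => by
  rw [sum_sub_distrib, hf X hX hXt, hg X hX hXt, sub_zero]

theorem of_insert (hi : i ∉ S) (h : IsNullDesign (insert i S) (t + 1) f) :
    IsNullDesign S t f := by
  simpa only [add_sub_cancel_right] using
    ((h.add_comp_insert hi).mono t.le_succ).sub (h.comp_insert hi)

end IsNullDesign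

theorem exists_ne_zero_powerset_insert {S : Finset α} {i : α} [Zero R] {f : Finset α → R}
    (h : ∃ F ∈ (insert i S).powerset, f F ≠ 0) :
    (∃ G ∈ S.powerset, f G ≠ 0) ∨ ∃ G ∈ S.powerset, f (insert i G) ≠ 0 := by
  obtain ⟨F, hF, hfF⟩ := h
  rw [powerset_insert, mem_union, mem_image] at hF
  rcases hF with hF | ⟨G, hG, rfl⟩
  exacts [Or.inl ⟨F, hF, hfF⟩, Or.inr ⟨G, hG, hfF⟩]

theorem card_filter_powerset_insert {S : Finset α} {i : α} (hi : i ∉ S) (p : Finset α → Prop)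
    [DecidablePred p] :
    #{F ∈ (insert i S).powerset | p F} =
      #{G ∈ S.powerset | p G} + #{G ∈ S.powerset | p (insert i G)} := by
  simp only [card_filter, sum_powerset_insert hi]

section LinearOrder

variable [AddCommGroup R] [LinearOrder R] [IsOrderedAddMonoid R]

theorem IsNullDesign.exists_pos {S : Finset α} {t : ℕ} {f : Finset α → R}
    (h : IsNullDesign S t f) (hf : ∃ F ∈ S.powerset, f F ≠ 0) : ∃ F ∈ S.powerset, 0 < f F := by
  have h₀ := h ∅ (empty_subset S) (by simp)
  simp only [empty_subset, filter_true] at h₀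
  exact exists_pos_of_sum_zero_of_exists_nonzero f h₀ hf

theorem IsNullDesign.two_pow_le_card_filter_pos {S : Finset α} {t : ℕ} {f : Finset α → R}
    (h : IsNullDesign S t f) (hf : ∃ F ∈ S.powerset, f F ≠ 0) :
    2 ^ t ≤ #{F ∈ S.powerset | 0 < f F} := by
  induction S using Finset.induction_on generalizing t f with
  | empty =>
    obtain ⟨F, hF, hfF⟩ := hf
    rw [powerset_empty, mem_singleton] at hF
    subst hF
    exact absurd (by simpa using h ∅ (empty_subset _) (Nat.zero_le t)) hfF
  | insert i S hi ih =>
    cases t with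
    | zero =>
      obtain ⟨F, hF, hfF⟩ := h.exists_pos hf
      simpa using ⟨F, mem_filter.2 ⟨hF, hfF⟩⟩
    | succ t =>
      rw [card_filter_powerset_insert hi, pow_succ, mul_two]
      by_cases h₀ : ∃ G ∈ S.powerset, f G ≠ 0 <;>
        by_cases h₁ : ∃ G ∈ S.powerset, f (insert i G) ≠ 0
      · exact add_le_add (ih (h.of_insert hi) h₀) (ih (h.comp_insert hi) h₁)
      · push Not at h₁
        have := ih ((h.add_comp_insert hi).congr fun G hG => by rw [h₁ G hG, add_zero]) h₀
        omega
      · push Not at h₀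
        have := ih ((h.add_comp_insert hi).congr fun G hG => by rw [h₀ G hG, zero_add]) h₁
        omega
      · exact ((exists_ne_zero_powerset_insert hf).elim h₀ h₁).elim

end LinearOrder

theorem stmt_5_general (n t : ℕ) (f : Finset (Fin n) → ℝ)
    (hdes : ∀ X : Finset (Fin n), X.card ≤ t →
      ∑ F ∈ Finset.univ.filter (fun F : Finset (Fin n) => X ⊆ F), f F = 0)
    (hne : f ≠ 0) :
    2 ^ t ≤ (Finset.univ.filter (fun F : Finset (Fin n) => 0 < f F)).card := by
  have hdesign : IsNullDesign (univ : Finset (Fin n)) t f := by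
    simpa only [IsNullDesign, powerset_univ, subset_univ, true_imp_iff] using hdes
  obtain ⟨F, hF⟩ := Function.ne_iff.1 hne
  simpa only [powerset_univ] using
    hdesign.two_pow_le_card_filter_pos ⟨F, powerset_univ (α := Fin n) ▸ mem_univ F, hF⟩

/-- If `f` is a real-valued null `t`-design on subsets of `{1,…,n}` that is not
identically zero, then its positive support has cardinality at least `2^t`. -/
theorem stmt_5 (n t : ℕ) (htn : t ≤ n) (f : Finset (Fin n) → ℝ)
    (hdes : ∀ X : Finset (Fin n), X.card ≤ t →
      ∑ F ∈ Finset.univ.filter (fun F : Finset (Fin n) => X ⊆ F), f F = 0)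
    (hne : f ≠ 0) :
    2 ^ t ≤ (Finset.univ.filter (fun F : Finset (Fin n) => 0 < f F)).card :=
  stmt_5_general n t f hdes hne
end

section
/- Fix integers 0 < t < k ≤ n and let v be a nonzero integer-valued vector indexed by the k-element subsets of {1,…,n} with 𝒜_{n,k,t}·v = 0. Then |{K : v(K) > 0}| ≥ 2^t and |{K : v(K) < 0}| ≥ 2^t; in particular the support of v has cardinality at least 2^{t+1}, and the binomial corresponding to v has degree max(∑_{v(K)>0} v(K), ∑_{v(K)<0} −v(K)) ≥ 2^t. Moreover, if v takes values only in {−1, 0, 1}, then |{K : v(K) > 0}| = |{K : v(K) < 0}|, so the corresponding squarefree binomial has degree exactly half the cardinality of the support of v. -/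
open Finset

lemma shiftSum {n : ℕ} (f : Finset (Fin n) → ℤ) (a : Fin n) (S : Finset (Fin n)) (haS : a ∉ S) :
    ∑ K ∈ Finset.univ.filter (fun K => S ⊆ K ∧ a ∉ K), f (insert a K)
      = ∑ K ∈ Finset.univ.filter (fun K => insert a S ⊆ K), f K := by
  apply Finset.sum_nbij' (i := fun K => insert a K) (j := fun K => K.erase a)
  · intro K hK
    simp only [mem_filter, mem_univ, true_and] at hK ⊢
    exact insert_subset_insert a hK.1
  · intro K hK
    simp only [mem_filter, mem_univ, true_and, insert_subset_iff] at hK ⊢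
    exact ⟨fun x hx => Finset.mem_erase.2 ⟨fun h => haS (h ▸ hx), hK.2 hx⟩, notMem_erase a K⟩
  · intro K hK
    simp only [mem_filter, mem_univ, true_and] at hK
    exact Finset.erase_insert hK.2
  · intro K hK
    simp only [mem_filter, mem_univ, true_and, insert_subset_iff] at hK
    exact Finset.insert_erase hK.1
  · intro K _; rfl

lemma sumSplit {n : ℕ} (g : Finset (Fin n) → ℤ) (a : Fin n) (S : Finset (Fin n)) :
    ∑ K ∈ Finset.univ.filter (fun K => S ⊆ K), (if a ∈ K then 0 else g K)
      = ∑ K ∈ Finset.univ.filter (fun K => S ⊆ K ∧ a ∉ K), g K := by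
  rw [show (Finset.univ.filter (fun K : Finset (Fin n) => S ⊆ K ∧ a ∉ K))
      = (Finset.univ.filter (fun K => S ⊆ K)).filter (fun K => a ∉ K) by
    rw [filter_filter]]
  conv_rhs => rw [Finset.sum_filter]
  refine Finset.sum_congr rfl fun K _ => ?_
  split_ifs <;> simp_all

/-- positive entries exist when sum is zero -/
lemma onePos {n : ℕ} (f : Finset (Fin n) → ℤ) (hf0 : f ≠ 0)
    (hsum : ∑ K ∈ (Finset.univ : Finset (Finset (Fin n))), f K = 0) :
    1 ≤ (Finset.univ.filter (fun K => 0 < f K)).card := by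
  by_contra h
  push_neg at h
  have hle : ∀ K ∈ (Finset.univ : Finset (Finset (Fin n))), f K ≤ 0 := by
    intro K _
    by_contra hK
    have hmem : K ∈ Finset.univ.filter (fun K => 0 < f K) :=
      Finset.mem_filter.2 ⟨Finset.mem_univ K, by omega⟩
    exact absurd (Finset.card_pos.2 ⟨K, hmem⟩) (by omega)
  have := (Finset.sum_eq_zero_iff_of_nonpos hle).1 hsum
  exact hf0 (funext fun K => this K (Finset.mem_univ K))

lemma filterEmptySubset {n : ℕ} :
    (Finset.univ.filter (fun K : Finset (Fin n) => (∅ : Finset (Fin n)) ⊆ K)) = Finset.univ :=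
  Finset.filter_true_of_mem fun _ _ => Finset.empty_subset _

lemma keyPos {n : ℕ} : ∀ (N : ℕ) (m : ℕ) (U : Finset (Fin n)) (f : Finset (Fin n) → ℤ),
    U.card ≤ N → 0 < m →
    (∀ K, f K ≠ 0 → K ⊆ U) → f ≠ 0 →
    (∀ S : Finset (Fin n), S.card < m →
      ∑ K ∈ Finset.univ.filter (fun K => S ⊆ K), f K = 0) →
    2 ^ (m - 1) ≤ (Finset.univ.filter (fun K => 0 < f K)).card := by
  intro N
  induction N with
  | zero =>
    intro m U f hUN hm hsupp hf0 hlev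
    exfalso
    have hU : U = ∅ := Finset.card_eq_zero.1 (Nat.le_zero.1 hUN)
    apply hf0
    have hne : ∀ K : Finset (Fin n), K ≠ ∅ → f K = 0 := by
      intro K hK
      by_contra h
      exact hK (Finset.subset_empty.1 (hU ▸ hsupp K h))
    have h0 := hlev ∅ (by simpa using hm)
    rw [filterEmptySubset, Finset.sum_eq_single ∅ (fun b _ hb => hne b hb)
      (fun h => absurd (Finset.mem_univ _) h)] at h0
    funext K
    by_cases hK : K = ∅
    · rw [hK, h0]; rfl
    · rw [hne K hK]; rfl
  | succ N IH =>
    intro m U f hUN hm hsupp hf0 hlev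
    -- m = 1 case
    rcases Nat.lt_or_ge m 2 with hm1 | hm2
    · have : m = 1 := by omega
      subst this
      have h0 := hlev ∅ (by simp)
      rw [filterEmptySubset] at h0
      simpa using onePos f hf0 h0
    -- U nonempty?
    rcases Finset.eq_empty_or_nonempty U with hU | ⟨a, haU⟩
    · exfalso
      apply hf0
      have hne : ∀ K : Finset (Fin n), K ≠ ∅ → f K = 0 := by
        intro K hK
        by_contra h
        exact hK (Finset.subset_empty.1 (hU ▸ hsupp K h))
      have h0 := hlev ∅ (by simpa using hm)
      rw [filterEmptySubset, Finset.sum_eq_single ∅ (fun b _ hb => hne b hb)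
        (fun h => absurd (Finset.mem_univ _) h)] at h0
      funext K
      by_cases hK : K = ∅
      · rw [hK, h0]; rfl
      · rw [hne K hK]; rfl
    set U' := U.erase a with hU'
    have hU'N : U'.card ≤ N := by
      rw [hU', Finset.card_erase_of_mem haU]; omega
    set f1 : Finset (Fin n) → ℤ := fun K => if a ∈ K then 0 else f (insert a K) with hf1def
    set f0 : Finset (Fin n) → ℤ := fun K => if a ∈ K then 0 else f K with hf0def
    -- support facts
    have hsupp1 : ∀ K, f1 K ≠ 0 → K ⊆ U' := by
      intro K hK
      simp only [hf1def] at hK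
      by_cases haK : a ∈ K
      · simp [haK] at hK
      · rw [if_neg haK] at hK
        have := hsupp _ hK
        rw [hU', Finset.subset_erase]
        exact ⟨(Finset.insert_subset_iff.1 this).2, haK⟩
    have hsupp0 : ∀ K, f0 K ≠ 0 → K ⊆ U' := by
      intro K hK
      simp only [hf0def] at hK
      by_cases haK : a ∈ K
      · simp [haK] at hK
      · rw [if_neg haK] at hK
        rw [hU', Finset.subset_erase]
        exact ⟨hsupp _ hK, haK⟩
    -- kernel facts
    have hlev1 : ∀ S : Finset (Fin n), S.card < m - 1 →
        ∑ K ∈ Finset.univ.filter (fun K => S ⊆ K), f1 K = 0 := by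
      intro S hS
      by_cases haS : a ∈ S
      · apply Finset.sum_eq_zero
        intro K hK
        simp only [Finset.mem_filter] at hK
        simp [hf1def, hK.2 haS]
      · rw [hf1def]
        rw [sumSplit (fun K => f (insert a K)) a S, shiftSum f a S haS]
        apply hlev
        rw [Finset.card_insert_of_notMem haS]; omega
    have hlevsum : ∀ S : Finset (Fin n), S.card < m →
        ∑ K ∈ Finset.univ.filter (fun K => S ⊆ K), (f0 K + f1 K) = 0 := by
      intro S hS
      by_cases haS : a ∈ S
      · apply Finset.sum_eq_zero
        intro K hK
        simp only [Finset.mem_filter] at hK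
        simp [hf1def, hf0def, hK.2 haS]
      · rw [Finset.sum_add_distrib, hf1def, hf0def,
          sumSplit (fun K => f (insert a K)) a S, shiftSum f a S haS,
          sumSplit f a S]
        have hsplit : ∑ K ∈ Finset.univ.filter (fun K => S ⊆ K ∧ a ∉ K), f K
            + ∑ K ∈ Finset.univ.filter (fun K => insert a S ⊆ K), f K
            = ∑ K ∈ Finset.univ.filter (fun K => S ⊆ K), f K := by
          rw [show (Finset.univ.filter (fun K : Finset (Fin n) => insert a S ⊆ K))
              = (Finset.univ.filter (fun K => S ⊆ K)).filter (fun K => a ∈ K) by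
            rw [filter_filter]
            apply Finset.filter_congr
            intro K _
            simp [Finset.insert_subset_iff, and_comm]]
          rw [show (Finset.univ.filter (fun K : Finset (Fin n) => S ⊆ K ∧ a ∉ K))
              = (Finset.univ.filter (fun K => S ⊆ K)).filter (fun K => a ∉ K) by
            rw [filter_filter]]
          rw [add_comm]
          exact Finset.sum_filter_add_sum_filter_not _ _ _
        rw [hsplit]
        exact hlev S hS
    -- cardinality split
    have hcard : (Finset.univ.filter (fun K => 0 < f K)).card
        = (Finset.univ.filter (fun K => 0 < f0 K)).card
          + (Finset.univ.filter (fun K => 0 < f1 K)).card := by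
      have e0 : (Finset.univ.filter (fun K => 0 < f K)).filter (fun K => ¬ a ∈ K)
          = Finset.univ.filter (fun K => 0 < f0 K) := by
        rw [filter_filter]
        apply Finset.filter_congr
        intro K _
        by_cases haK : a ∈ K <;> simp [hf0def, haK]
      have e1 : ((Finset.univ.filter (fun K => 0 < f K)).filter (fun K => a ∈ K)).card
          = (Finset.univ.filter (fun K => 0 < f1 K)).card := by
        refine Finset.card_bij' (fun K _ => K.erase a) (fun K _ => insert a K) ?_ ?_ ?_ ?_
        case _ =>
          intro K hK
          simp only [Finset.mem_filter, Finset.mem_univ, true_and] at hK ⊢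
          rw [hf1def]
          simp only [Finset.notMem_erase, if_neg, Finset.insert_erase hK.2]
          simpa using hK.1
        case _ =>
          intro K hK
          simp only [Finset.mem_filter, Finset.mem_univ, true_and] at hK ⊢
          have haK : a ∉ K := by
            intro h
            simp [hf1def, h] at hK
          simp only [hf1def, if_neg haK] at hK
          exact ⟨hK, Finset.mem_insert_self a K⟩
        case _ =>
          intro K hK
          simp only [Finset.mem_filter, Finset.mem_univ, true_and] at hK
          exact Finset.insert_erase hK.2
        case _ =>
          intro K hK
          simp only [Finset.mem_filter, Finset.mem_univ, true_and] at hK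
          have haK : a ∉ K := by
            intro h
            simp [hf1def, h] at hK
          exact Finset.erase_insert haK
      have htot := Finset.card_filter_add_card_filter_not
        (s := Finset.univ.filter (fun K => 0 < f K)) (p := fun K => a ∈ K)
      rw [e0, e1] at htot
      omega
    -- case analysis
    by_cases hf1z : f1 = 0
    · have hsuppf : ∀ K, f K ≠ 0 → K ⊆ U' := by
        intro K hK
        have haK : a ∉ K := by
          intro haK
          have h1 : f1 (K.erase a) = 0 := congrFun hf1z _
          simp only [hf1def, Finset.notMem_erase, if_neg, Finset.insert_erase haK] at h1
          exact hK h1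
        rw [hU', Finset.subset_erase]
        exact ⟨hsupp K hK, haK⟩
      exact IH m U' f hU'N hm hsuppf hf0 hlev
    · by_cases hfsum : (fun K => f0 K + f1 K) = (0 : Finset (Fin n) → ℤ)
      · have hf0eq : ∀ K, f0 K = - f1 K := by
          intro K
          have := congrFun hfsum K
          simp at this
          linarith
        have hpos1 := IH (m-1) U' f1 hU'N (by omega) hsupp1 hf1z hlev1
        have hneg1 := IH (m-1) U' (fun K => - f1 K) hU'N (by omega)
          (fun K hK => hsupp1 K (by simpa using hK))
          (by
            intro h
            apply hf1z
            funext K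
            have := congrFun h K
            simp at this
            exact this)
          (by
            intro S hS
            rw [Finset.sum_neg_distrib, hlev1 S hS, neg_zero])
        have e2 : Finset.univ.filter (fun K => 0 < f0 K)
            = Finset.univ.filter (fun K => 0 < - f1 K) := by
          apply Finset.filter_congr
          intro K _
          rw [hf0eq K]
        rw [hcard, e2]
        have hp : 2 ^ (m-2) + 2 ^ (m-2) = 2 ^ (m-1) := by
          obtain ⟨m', rfl⟩ : ∃ m', m = m' + 2 := ⟨m - 2, by omega⟩
          simp only [Nat.add_sub_cancel, show m' + 2 - 1 = m' + 1 from rfl, pow_succ]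
          ring
        calc 2 ^ (m-1) = 2 ^ (m-2) + 2 ^ (m-2) := hp.symm
          _ ≤ _ := Nat.add_le_add hneg1 hpos1
      · have hsupph : ∀ K, f0 K + f1 K ≠ 0 → K ⊆ U' := by
          intro K hK
          rcases ne_or_eq (f0 K) 0 with h | h
          · exact hsupp0 K h
          · exact hsupp1 K (by rw [h, zero_add] at hK; exact hK)
        have hposh := IH m U' (fun K => f0 K + f1 K) hU'N hm hsupph hfsum hlevsum
        have hsub : Finset.univ.filter (fun K => 0 < f0 K + f1 K)
            ⊆ Finset.univ.filter (fun K => 0 < f0 K) ∪ Finset.univ.filter (fun K => 0 < f1 K) := by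
          intro K hK
          simp only [Finset.mem_filter, Finset.mem_univ, true_and, Finset.mem_union] at hK ⊢
          omega
        calc 2 ^ (m-1) ≤ (Finset.univ.filter (fun K => 0 < f0 K + f1 K)).card := hposh
          _ ≤ ((Finset.univ.filter (fun K => 0 < f0 K))
                ∪ (Finset.univ.filter (fun K => 0 < f1 K))).card := Finset.card_le_card hsub
          _ ≤ _ := Finset.card_union_le _ _
          _ = _ := hcard.symm


lemma descend {n k t : ℕ} (htk : t < k) (f : Finset (Fin n) → ℤ)
    (hsuppk : ∀ K, f K ≠ 0 → K.card = k)
    (hlevt : ∀ S : Finset (Fin n), S.card = t →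
      ∑ K ∈ Finset.univ.filter (fun K => S ⊆ K), f K = 0) :
    ∀ (d : ℕ) (S : Finset (Fin n)), S.card + d = t →
      ∑ K ∈ Finset.univ.filter (fun K => S ⊆ K), f K = 0 := by
  intro d
  induction d with
  | zero => intro S hS; exact hlevt S (by omega)
  | succ d IH =>
    intro S hS
    have hSk : S.card < k := by omega
    have h2 : ∑ x ∈ Finset.univ \ S,
        ∑ K ∈ Finset.univ.filter (fun K => insert x S ⊆ K), f K = 0 := by
      apply Finset.sum_eq_zero
      intro x hx
      have hxS : x ∉ S := (Finset.mem_sdiff.1 hx).2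
      exact IH (insert x S) (by rw [Finset.card_insert_of_notMem hxS]; omega)
    have hinner : ∀ K : Finset (Fin n),
        ∑ x ∈ Finset.univ \ S, (if insert x S ⊆ K then f K else 0)
          = (if S ⊆ K then ((K \ S).card : ℤ) * f K else 0) := by
      intro K
      by_cases hSK : S ⊆ K
      · rw [if_pos hSK]
        have hcond : ∀ x ∈ Finset.univ \ S,
            (if insert x S ⊆ K then f K else 0) = (if x ∈ K then f K else 0) := by
          intro x _
          congr 1
          simp [Finset.insert_subset_iff, hSK]
        rw [Finset.sum_congr rfl hcond, Finset.sum_ite_mem, Finset.sum_const,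
          show (Finset.univ \ S) ∩ K = K \ S by
            ext x; simp [Finset.mem_sdiff, and_comm],
          nsmul_eq_mul]
      · rw [if_neg hSK]
        apply Finset.sum_eq_zero
        intro x _
        exact if_neg (fun h => hSK ((Finset.subset_insert x S).trans h))
    have h4 : ∑ K ∈ (Finset.univ : Finset (Finset (Fin n))),
        (if S ⊆ K then ((K \ S).card : ℤ) * f K else 0) = 0 := by
      calc ∑ K ∈ (Finset.univ : Finset (Finset (Fin n))),
            (if S ⊆ K then ((K \ S).card : ℤ) * f K else 0)
          = ∑ K ∈ (Finset.univ : Finset (Finset (Fin n))),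
              ∑ x ∈ Finset.univ \ S, (if insert x S ⊆ K then f K else 0) :=
            Finset.sum_congr rfl (fun K _ => (hinner K).symm)
        _ = ∑ x ∈ Finset.univ \ S, ∑ K ∈ (Finset.univ : Finset (Finset (Fin n))),
              (if insert x S ⊆ K then f K else 0) := Finset.sum_comm
        _ = ∑ x ∈ Finset.univ \ S,
              ∑ K ∈ Finset.univ.filter (fun K => insert x S ⊆ K), f K :=
            Finset.sum_congr rfl (fun x _ => (Finset.sum_filter _ _).symm)
        _ = 0 := h2
    have h5 : ∀ K : Finset (Fin n), (if S ⊆ K then ((K \ S).card : ℤ) * f K else 0)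
        = ((k - S.card : ℕ) : ℤ) * (if S ⊆ K then f K else 0) := by
      intro K
      by_cases hSK : S ⊆ K
      · rw [if_pos hSK, if_pos hSK]
        rcases eq_or_ne (f K) 0 with h | h
        · rw [h, mul_zero, mul_zero]
        · rw [Finset.card_sdiff_of_subset hSK, hsuppk K h]
      · simp [hSK]
    have h6 : ((k - S.card : ℕ) : ℤ) * ∑ K ∈ Finset.univ.filter (fun K => S ⊆ K), f K = 0 := by
      calc ((k - S.card : ℕ) : ℤ) * ∑ K ∈ Finset.univ.filter (fun K => S ⊆ K), f K
          = ((k - S.card : ℕ) : ℤ) * ∑ K ∈ (Finset.univ : Finset (Finset (Fin n))),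
              (if S ⊆ K then f K else 0) := by rw [Finset.sum_filter]
        _ = ∑ K ∈ (Finset.univ : Finset (Finset (Fin n))),
              ((k - S.card : ℕ) : ℤ) * (if S ⊆ K then f K else 0) := Finset.mul_sum _ _ _
        _ = ∑ K ∈ (Finset.univ : Finset (Finset (Fin n))),
              (if S ⊆ K then ((K \ S).card : ℤ) * f K else 0) :=
            Finset.sum_congr rfl (fun K _ => (h5 K).symm)
        _ = 0 := h4
    have hc : ((k - S.card : ℕ) : ℤ) ≠ 0 := by
      simp only [ne_eq, Nat.cast_eq_zero]
      omega
    exact (mul_eq_zero.1 h6).resolve_left hc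

lemma sumTransfer {n k : ℕ} (v : {K : Finset (Fin n) // K.card = k} → ℤ)
    (f : Finset (Fin n) → ℤ)
    (hf : ∀ (K : Finset (Fin n)) (h : K.card = k), f K = v ⟨K, h⟩)
    (hf0 : ∀ K : Finset (Fin n), K.card ≠ k → f K = 0) (S : Finset (Fin n)) :
    ∑ K ∈ Finset.univ.filter (fun K : Finset (Fin n) => S ⊆ K), f K
      = ∑ K ∈ Finset.univ.filter (fun K : {K : Finset (Fin n) // K.card = k} => S ⊆ K.1), v K := by
  rw [Finset.sum_filter, Finset.sum_filter]
  have h1 : ∑ K ∈ (Finset.univ : Finset (Finset (Fin n))), (if S ⊆ K then f K else 0)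
      = ∑ K ∈ Finset.univ.filter (fun K : Finset (Fin n) => K.card = k),
          (if S ⊆ K then f K else 0) := by
    refine (Finset.sum_subset (Finset.filter_subset _ _) ?_).symm
    intro K _ hK
    have hc : K.card ≠ k := by simpa using hK
    rw [hf0 K hc, ite_self]
  rw [h1, Finset.sum_subtype (p := fun K : Finset (Fin n) => K.card = k) _ (fun K => by simp) (fun K => if S ⊆ K then f K else 0)]
  apply Finset.sum_congr rfl
  intro K _
  rcases K with ⟨K, hK⟩
  simp only
  rw [hf K hK]

lemma cardTransfer {n k : ℕ} (v : {K : Finset (Fin n) // K.card = k} → ℤ)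
    (f : Finset (Fin n) → ℤ)
    (hf : ∀ (K : Finset (Fin n)) (h : K.card = k), f K = v ⟨K, h⟩)
    (hf0 : ∀ K : Finset (Fin n), K.card ≠ k → f K = 0)
    (p : ℤ → Prop) [DecidablePred p] (hp0 : ¬ p 0) :
    (Finset.univ.filter (fun K : Finset (Fin n) => p (f K))).card
      = (Finset.univ.filter (fun K : {K : Finset (Fin n) // K.card = k} => p (v K))).card := by
  refine Finset.card_bij' (fun K hK => (⟨K, ?_⟩ : {K : Finset (Fin n) // K.card = k}))
    (fun K _ => K.1) ?_ ?_ ?_ ?_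
  · simp only [Finset.mem_filter] at hK
    by_contra h
    rw [hf0 K h] at hK
    exact hp0 hK.2
  · intro K hK
    simp only [Finset.mem_filter, Finset.mem_univ, true_and] at hK ⊢
    have hc : K.card = k := by
      by_contra h
      rw [hf0 K h] at hK
      exact hp0 hK
    rw [hf K hc] at hK
    exact hK
  · intro K hK
    simp only [Finset.mem_filter, Finset.mem_univ, true_and] at hK ⊢
    rw [hf K.1 K.2]
    simpa using hK
  · intro K _; rfl
  · intro K _; rfl

/-- A nonzero integer vector `v` in the kernel of `𝒜_{n,k,t}` has at least `2^t`
positive entries and at least `2^t` negative entries, hence support of size at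
least `2^(t+1)`, and the corresponding binomial has degree
`max(∑_{v>0} v, ∑_{v<0} −v) ≥ 2^t`. If moreover `v` has entries in `{−1,0,1}`,
then the numbers of positive and negative entries agree, so the corresponding
squarefree binomial has degree exactly half the size of the support. -/
theorem stmt_6 (n k t : ℕ) (ht : 0 < t) (htk : t < k) (hkn : k ≤ n)
    (v : {K : Finset (Fin n) // K.card = k} → ℤ) (hv : v ≠ 0)
    (hker : (incMat ℤ n k t).mulVec v = 0) :
    2 ^ t ≤ (Finset.univ.filter (fun K => 0 < v K)).card ∧
    2 ^ t ≤ (Finset.univ.filter (fun K => v K < 0)).card ∧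
    2 ^ (t + 1) ≤ (Finset.univ.filter (fun K => v K ≠ 0)).card ∧
    (2 : ℤ) ^ t ≤ max (∑ K ∈ Finset.univ.filter (fun K => 0 < v K), v K)
        (∑ K ∈ Finset.univ.filter (fun K => v K < 0), -v K) ∧
    ((∀ K, v K = -1 ∨ v K = 0 ∨ v K = 1) →
      (Finset.univ.filter (fun K => 0 < v K)).card
        = (Finset.univ.filter (fun K => v K < 0)).card) := by
  classical
  set f : Finset (Fin n) → ℤ := fun K => if h : K.card = k then v ⟨K, h⟩ else 0 with hfdef
  have hf : ∀ (K : Finset (Fin n)) (h : K.card = k), f K = v ⟨K, h⟩ := fun K h => dif_pos h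
  have hf0 : ∀ K : Finset (Fin n), K.card ≠ k → f K = 0 := fun K h => dif_neg h
  have hsuppk : ∀ K, f K ≠ 0 → K.card = k := by
    intro K hK
    by_contra h
    exact hK (hf0 K h)
  have hlevt : ∀ S : Finset (Fin n), S.card = t →
      ∑ K ∈ Finset.univ.filter (fun K => S ⊆ K), f K = 0 := by
    intro S hS
    rw [sumTransfer v f hf hf0 S]
    have hk0 := congrFun hker ⟨S, hS⟩
    simp only [Matrix.mulVec, dotProduct, incMat, Pi.zero_apply, ite_mul, one_mul,
      zero_mul] at hk0
    rw [Finset.sum_filter]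
    exact hk0
  have hlev : ∀ S : Finset (Fin n), S.card < t + 1 →
      ∑ K ∈ Finset.univ.filter (fun K => S ⊆ K), f K = 0 := by
    intro S hS
    exact descend htk f hsuppk hlevt (t - S.card) S (by omega)
  have hfne : f ≠ 0 := by
    obtain ⟨K0, hK0⟩ := Function.ne_iff.1 hv
    intro h
    apply hK0
    have h2 := congrFun h K0.1
    rw [hf K0.1 K0.2] at h2
    simpa using h2
  have hposf := keyPos (Finset.univ : Finset (Fin n)).card (t + 1) Finset.univ f le_rfl
    (by omega) (fun K _ => Finset.subset_univ K) hfne hlev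
  have hnegf := keyPos (Finset.univ : Finset (Fin n)).card (t + 1) Finset.univ
    (fun K => - f K) le_rfl (by omega) (fun K hK => Finset.subset_univ K)
    (by
      intro h
      apply hfne
      funext K
      have := congrFun h K
      simp only [Pi.zero_apply] at this
      simpa using this)
    (by
      intro S hS
      rw [Finset.sum_neg_distrib, hlev S hS, neg_zero])
  simp only [Nat.add_sub_cancel] at hposf hnegf
  have hposcard := cardTransfer v f hf hf0 (fun x => 0 < x) (by simp)
  have hnegcard := cardTransfer v f hf hf0 (fun x => x < 0) (by simp)
  have hpos : 2 ^ t ≤ (Finset.univ.filter (fun K => 0 < v K)).card := by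
    rw [← hposcard]
    exact hposf
  have hnegf' : 2 ^ t ≤ (Finset.univ.filter (fun K : Finset (Fin n) => f K < 0)).card := by
    refine le_trans hnegf (le_of_eq ?_)
    congr 1
    apply Finset.filter_congr
    intro K _
    simp [neg_pos]
  have hneg : 2 ^ t ≤ (Finset.univ.filter (fun K => v K < 0)).card := by
    rw [← hnegcard]
    exact hnegf'
  refine ⟨hpos, hneg, ?_, ?_, ?_⟩
  · have hunion : Finset.univ.filter (fun K => v K ≠ 0)
        = Finset.univ.filter (fun K => 0 < v K) ∪ Finset.univ.filter (fun K => v K < 0) := by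
      rw [← Finset.filter_or]
      apply Finset.filter_congr
      intro K _
      constructor
      · intro h; omega
      · intro h; omega
    have hdisj : Disjoint (Finset.univ.filter (fun K => 0 < v K))
        (Finset.univ.filter (fun K => v K < 0)) := by
      rw [Finset.disjoint_left]
      intro K h1 h2
      simp only [Finset.mem_filter] at h1 h2
      omega
    rw [hunion, Finset.card_union_of_disjoint hdisj, pow_succ]
    omega
  · refine le_trans ?_ (le_max_left _ _)
    have h1 : ((Finset.univ.filter (fun K => 0 < v K)).card : ℤ)
        ≤ ∑ K ∈ Finset.univ.filter (fun K => 0 < v K), v K := by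
      have := Finset.card_nsmul_le_sum (Finset.univ.filter (fun K => 0 < v K)) v 1
        (by intro x hx; simp only [Finset.mem_filter] at hx; omega)
      simpa using this
    calc (2 : ℤ) ^ t ≤ ((Finset.univ.filter (fun K => 0 < v K)).card : ℤ) := by
          exact_mod_cast hpos
      _ ≤ _ := h1
  · intro htri
    have hsum0 : ∑ K ∈ (Finset.univ : Finset {K : Finset (Fin n) // K.card = k}), v K = 0 := by
      have h0 := hlev ∅ (by simp)
      rw [sumTransfer v f hf hf0 ∅] at h0
      rw [show (Finset.univ.filter
          (fun K : {K : Finset (Fin n) // K.card = k} => (∅ : Finset (Fin n)) ⊆ K.1))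
          = Finset.univ from Finset.filter_true_of_mem fun _ _ => Finset.empty_subset _] at h0
      exact h0
    have hsplit := Finset.sum_filter_add_sum_filter_not
      (Finset.univ : Finset {K : Finset (Fin n) // K.card = k}) (fun K => 0 < v K) v
    have hsplit2 := Finset.sum_filter_add_sum_filter_not
      (Finset.univ.filter (fun K : {K : Finset (Fin n) // K.card = k} => ¬ 0 < v K))
      (fun K => v K < 0) v
    have e1 : ∑ K ∈ Finset.univ.filter (fun K : {K : Finset (Fin n) // K.card = k} => 0 < v K), v K
        = ((Finset.univ.filter (fun K : {K : Finset (Fin n) // K.card = k} => 0 < v K)).card : ℤ) := by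
      rw [Finset.sum_congr rfl (fun K hK => ?_), Finset.sum_const, nsmul_eq_mul, mul_one]
      simp only [Finset.mem_filter] at hK
      rcases htri K with h | h | h <;> omega
    have e2 : (Finset.univ.filter (fun K : {K : Finset (Fin n) // K.card = k} => ¬ 0 < v K)).filter
          (fun K => v K < 0) = Finset.univ.filter (fun K => v K < 0) := by
      rw [Finset.filter_filter]
      apply Finset.filter_congr
      intro K _
      constructor
      · intro h; exact h.2
      · intro h; exact ⟨by omega, h⟩
    have e3 : ∑ K ∈ Finset.univ.filter (fun K : {K : Finset (Fin n) // K.card = k} => v K < 0), v K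
        = -((Finset.univ.filter (fun K : {K : Finset (Fin n) // K.card = k} => v K < 0)).card : ℤ) := by
      rw [Finset.sum_congr rfl (fun K hK => ?_), Finset.sum_const, nsmul_eq_mul, mul_neg_one]
      simp only [Finset.mem_filter] at hK
      rcases htri K with h | h | h <;> omega
    have e4 : ∑ K ∈ ((Finset.univ.filter
          (fun K : {K : Finset (Fin n) // K.card = k} => ¬ 0 < v K)).filter
          (fun K => ¬ v K < 0)), v K = 0 := by
      apply Finset.sum_eq_zero
      intro K hK
      simp only [Finset.mem_filter] at hK
      omega
    rw [e2] at hsplit2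
    rw [e3, e4] at hsplit2
    rw [hsum0, e1, ← hsplit2] at hsplit
    have : ((Finset.univ.filter (fun K : {K : Finset (Fin n) // K.card = k} => 0 < v K)).card : ℤ)
        = ((Finset.univ.filter (fun K : {K : Finset (Fin n) // K.card = k} => v K < 0)).card : ℤ) := by
      linarith
    exact_mod_cast this
end

section
/- Fix integers 0 < t < k ≤ n, let V ⊂ ℝ^{binom(n,t)} be the set of columns of 𝒜_{n,k,t} (each column being the 0/1 indicator vector of the t-subsets contained in a given k-subset), and let 𝒫_{n,k,t} = convexHull ℝ V. Then 𝒫_{n,k,t} is (2^t − 1)-neighborly: for every subset S ⊆ V with |S| ≤ 2^t − 1, the convex hull convexHull ℝ S is a face of 𝒫_{n,k,t}, i.e., convexHull ℝ S is an extreme subset of 𝒫_{n,k,t} (IsExtreme ℝ 𝒫_{n,k,t} (convexHull ℝ S)). -/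
open Finset Matrix

section Weights

open Set

variable {ι E : Type*} [Fintype ι] [AddCommGroup E] [Module ℝ E]

theorem exists_weights_of_mem_convexHull_image {v : ι → E} {I : Set ι} {x : E}
    (hx : x ∈ convexHull ℝ (v '' I)) :
    ∃ w : ι → ℝ, (∀ i, 0 ≤ w i) ∧ (∀ i ∉ I, w i = 0) ∧ ∑ i, w i = 1 ∧ ∑ i, w i • v i = x := by
  classical
  suffices convexHull ℝ (v '' I) ⊆
      {x | ∃ w : ι → ℝ, (∀ i, 0 ≤ w i) ∧ (∀ i ∉ I, w i = 0) ∧ ∑ i, w i = 1 ∧ ∑ i, w i • v i = x}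
    from this hx
  refine convexHull_min ?_ ?_
  · rintro _ ⟨i, hi, rfl⟩
    refine ⟨Pi.single i 1, fun j => ?_,
      fun j hj => Pi.single_eq_of_ne (ne_of_mem_of_not_mem hi hj).symm _, by simp, by simp⟩
    by_cases hji : j = i <;> simp [hji]
  · rintro _ ⟨w₁, hw₁, hw₁I, hw₁1, rfl⟩ _ ⟨w₂, hw₂, hw₂I, hw₂1, rfl⟩ a b ha hb hab
    refine ⟨a • w₁ + b • w₂, fun i => ?_, fun i hi => by simp [hw₁I i hi, hw₂I i hi], ?_, ?_⟩
    · simp only [Pi.add_apply, Pi.smul_apply, smul_eq_mul]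
      exact add_nonneg (mul_nonneg ha (hw₁ i)) (mul_nonneg hb (hw₂ i))
    · simp [sum_add_distrib, ← mul_sum, hw₁1, hw₂1, hab]
    · simp [add_smul, mul_smul, sum_add_distrib, smul_sum]

theorem sum_smul_mem_convexHull_image {v : ι → E} {I : Finset ι} {w : ι → ℝ}
    (hw : ∀ i, 0 ≤ w i) (hwI : ∀ i ∉ I, w i = 0) (hw1 : ∑ i, w i = 1) :
    ∑ i, w i • v i ∈ convexHull ℝ (v '' I) := by
  have hsum : ∑ i ∈ I, w i = 1 := by
    rwa [sum_subset (subset_univ I) fun i _ hi => hwI i hi]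
  rw [← sum_subset (subset_univ I) fun i _ hi => by rw [hwI i hi, zero_smul],
    ← centerMass_eq_of_sum_1 _ _ hsum]
  exact I.centerMass_mem_convexHull (fun i _ => hw i) (hsum ▸ one_pos)
    fun i hi => mem_image_of_mem v hi

theorem isExtreme_convexHull_image_of_weights (v : ι → E) (I : Finset ι)
    (h : ∀ u w : ι → ℝ, (∀ i, 0 ≤ u i) → (∀ i ∉ I, u i = 0) → (∀ i, 0 ≤ w i) →
      ∑ i, w i • v i = ∑ i, u i • v i → ∀ i ∉ I, w i = 0) :
    IsExtreme ℝ (convexHull ℝ (range v)) (convexHull ℝ (v '' I)) := by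
  refine ⟨convexHull_mono (image_subset_range v I), ?_⟩
  rintro x₁ hx₁ x₂ hx₂ x hx ⟨a, b, ha, hb, hab, rfl⟩
  obtain ⟨u, hu, huI, -, hux⟩ := exists_weights_of_mem_convexHull_image hx
  obtain ⟨w₁, hw₁, -, hw₁1, rfl⟩ :=
    exists_weights_of_mem_convexHull_image (I := univ) (x := x₁) (by rwa [image_univ])
  obtain ⟨w₂, hw₂, -, hw₂1, rfl⟩ :=
    exists_weights_of_mem_convexHull_image (I := univ) (x := x₂) (by rwa [image_univ])
  have hmix := h u (a • w₁ + b • w₂) hu huI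
    (fun i => add_nonneg (mul_nonneg ha.le (hw₁ i)) (mul_nonneg hb.le (hw₂ i)))
    (by simp [hux, add_smul, mul_smul, sum_add_distrib, smul_sum])
  refine sum_smul_mem_convexHull_image hw₁ (fun i hi => ?_) hw₁1
  have := hmix i hi
  simp only [Pi.add_apply, Pi.smul_apply, smul_eq_mul] at this
  rw [add_eq_zero_iff_of_nonneg (mul_nonneg ha.le (hw₁ i)) (mul_nonneg hb.le (hw₂ i)),
    mul_eq_zero] at this
  exact this.1.resolve_left ha.ne'

end Weights

section BooleanLattice

variable {α : Type*} [DecidableEq α] {x : α} {s : Finset α} {t : ℕ} {f : Finset α → ℝ}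

theorem sum_filter_powerset_insert {M : Type*} [AddCommMonoid M] (hx : x ∉ s) (T : Finset α)
    (f : Finset α → M) :
    ∑ A ∈ (insert x s).powerset with T ⊆ A, f A =
      ∑ A ∈ s.powerset with T ⊆ A, f A + ∑ A ∈ s.powerset with T ⊆ insert x A, f (insert x A) := by
  simp only [sum_filter]
  exact sum_powerset_insert hx _

theorem moments_add_insert_eq_zero (hx : x ∉ s)
    (hmom : ∀ T ⊆ insert x s, #T ≤ t → ∑ A ∈ (insert x s).powerset with T ⊆ A, f A = 0) :
    ∀ T ⊆ s, #T ≤ t → ∑ A ∈ s.powerset with T ⊆ A, (f A + f (insert x A)) = 0 := by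
  intro T hT hTt
  have hxT : x ∉ T := fun hxT => hx (hT hxT)
  rw [← hmom T (hT.trans (subset_insert x s)) hTt, sum_filter_powerset_insert hx,
    sum_add_distrib]
  simp only [subset_insert_iff_of_notMem hxT]

theorem moments_insert_eq_zero (hx : x ∉ s)
    (hmom : ∀ T ⊆ insert x s, #T ≤ t + 1 → ∑ A ∈ (insert x s).powerset with T ⊆ A, f A = 0) :
    ∀ T ⊆ s, #T ≤ t → ∑ A ∈ s.powerset with T ⊆ A, f (insert x A) = 0 := by
  intro T hT hTt
  have hxT : x ∉ T := fun hxT => hx (hT hxT)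
  have hempty : ∑ A ∈ s.powerset with insert x T ⊆ A, f A = 0 :=
    sum_eq_zero fun A hA => absurd ((mem_filter.1 hA).2 (mem_insert_self x T))
      fun hxA => hx (mem_powerset.1 (mem_filter.1 hA).1 hxA)
  rw [← hmom (insert x T) (insert_subset_insert x hT) (by grind [card_insert_of_notMem]),
    sum_filter_powerset_insert hx, hempty, zero_add]
  simp only [insert_subset_insert_iff hxT]

theorem two_pow_le_card_pos_of_moments_eq_zero {Ω : Finset α}
    (hmom : ∀ T ⊆ Ω, #T ≤ t → ∑ A ∈ Ω.powerset with T ⊆ A, f A = 0)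
    (hf : ∃ A ∈ Ω.powerset, f A ≠ 0) :
    2 ^ t ≤ #{A ∈ Ω.powerset | 0 < f A} := by
  induction Ω using Finset.induction_on generalizing t f with
  | empty =>
    obtain ⟨A, hA, hfA⟩ := hf
    rw [powerset_empty, mem_singleton] at hA
    subst hA
    exact absurd (by simpa using hmom ∅ subset_rfl (by simp)) hfA
  | @insert x s hx ih =>
    cases t with
    | zero =>
      have htot : ∑ A ∈ (insert x s).powerset, f A = 0 := by
        simpa using hmom ∅ (empty_subset _) le_rfl
      obtain ⟨A, hA, hpos⟩ := exists_pos_of_sum_zero_of_exists_nonzero f htot hf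
      exact card_pos.2 ⟨A, mem_filter.2 ⟨hA, hpos⟩⟩
    | succ r =>
      set h : Finset α → ℝ := fun A => f (insert x A)
      have hcard : #{A ∈ (insert x s).powerset | 0 < f A} =
          #{A ∈ s.powerset | 0 < f A} + #{A ∈ s.powerset | 0 < h A} := by
        simp only [card_filter]
        exact sum_powerset_insert hx _
      -- `f + h` inherits the moments of order `r + 1` and `h` those of order `r`; when `f + h`
      -- vanishes, `f = -h` on `s.powerset` and both `h` and `-h` contribute `2 ^ r`.
      by_cases hg : ∃ A ∈ s.powerset, f A + h A ≠ 0
      · calc 2 ^ (r + 1) ≤ #{A ∈ s.powerset | 0 < f A + h A} :=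
              ih (moments_add_insert_eq_zero hx hmom) hg
          _ ≤ #({A ∈ s.powerset | 0 < f A} ∪ {A ∈ s.powerset | 0 < h A}) := by
            refine card_le_card fun A hA => ?_
            simp only [mem_filter, mem_union] at hA ⊢
            by_contra! hle
            linarith [hle.1 hA.1, hle.2 hA.1]
          _ ≤ _ := hcard ▸ card_union_le _ _
      · push Not at hg
        have hmom_h := moments_insert_eq_zero hx hmom
        have hh : ∃ A ∈ s.powerset, h A ≠ 0 := by
          obtain ⟨A, hA, hfA⟩ := hf
          rw [powerset_insert, mem_union, mem_image] at hA
          rcases hA with hA | ⟨B, hB, rfl⟩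
          · exact ⟨A, hA, fun hhA => hfA (by linarith [hg A hA])⟩
          · exact ⟨B, hB, hfA⟩
        have hneg : #{A ∈ s.powerset | 0 < f A} = #{A ∈ s.powerset | 0 < -h A} :=
          congrArg card (filter_congr fun A hA => by rw [eq_neg_of_add_eq_zero_left (hg A hA)])
        have hpos_neg : 2 ^ r ≤ #{A ∈ s.powerset | 0 < -h A} :=
          ih (fun T hT hTr => by rw [sum_neg_distrib, hmom_h T hT hTr, neg_zero])
            (by simpa only [ne_eq, neg_eq_zero] using hh)
        calc 2 ^ (r + 1) = 2 ^ r + 2 ^ r := by ring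
          _ ≤ _ := by rw [hcard, hneg]; exact add_le_add hpos_neg (ih hmom_h hh)

theorem sum_sdiff_sum_filter_insert_subset {Ω T : Finset α} {k : ℕ}
    (hf : ∀ A ⊆ Ω, f A ≠ 0 → #A = k) :
    ∑ i ∈ Ω \ T, ∑ A ∈ Ω.powerset with insert i T ⊆ A, f A =
      (k - #T) • ∑ A ∈ Ω.powerset with T ⊆ A, f A := by
  simp only [sum_filter, smul_sum]
  rw [sum_comm]
  refine sum_congr rfl fun A hA => ?_
  rw [mem_powerset] at hA
  by_cases hTA : T ⊆ A
  · have hcount : {i ∈ Ω \ T | insert i T ⊆ A} = A \ T := by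
      ext i
      simp only [mem_filter, mem_sdiff, insert_subset_iff]
      exact ⟨fun h => ⟨h.2.1, h.1.2⟩, fun h => ⟨⟨hA h.1, h.2⟩, h.1, hTA⟩⟩
    rw [if_pos hTA, ← sum_filter, sum_const, hcount, card_sdiff_of_subset hTA]
    by_cases hfA : f A = 0
    · simp [hfA]
    · rw [hf A hA hfA]
  · rw [if_neg hTA, smul_zero]
    exact sum_eq_zero fun i _ => if_neg fun h => hTA ((subset_insert i T).trans h)

theorem moments_eq_zero_of_card_le {Ω : Finset α} {k : ℕ}
    (hf : ∀ A ⊆ Ω, f A ≠ 0 → #A = k) (htk : t ≤ k)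
    (hmom : ∀ T ⊆ Ω, #T = t → ∑ A ∈ Ω.powerset with T ⊆ A, f A = 0) :
    ∀ T ⊆ Ω, #T ≤ t → ∑ A ∈ Ω.powerset with T ⊆ A, f A = 0 := by
  intro T hT hTt
  obtain ⟨j, hj⟩ := Nat.exists_eq_add_of_le hTt
  induction j generalizing T with
  | zero => exact hmom T hT hj.symm
  | succ j ih =>
    have hsum := sum_sdiff_sum_filter_insert_subset (T := T) hf
    rw [sum_eq_zero fun i hi => ?_] at hsum
    · exact (smul_eq_zero.1 hsum.symm).resolve_left (by omega)
    · rw [mem_sdiff] at hi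
      exact ih _ (insert_subset hi.1 hT) (by grind [card_insert_of_notMem])
        (by rw [card_insert_of_notMem hi.2]; omega)

end BooleanLattice

theorem sum_extend_subtype_val {β R M : Type*} [Fintype β] [Zero R] [AddCommMonoid M]
    {p : β → Prop} [DecidablePred p] (d : Subtype p → R) (G : β → R → M) (hG : ∀ b, G b 0 = 0) :
    ∑ b, G b (Function.extend Subtype.val d 0 b) = ∑ K : Subtype p, G K (d K) := by
  have hout (b : {b // ¬p b}) : G b (Function.extend Subtype.val d 0 b) = 0 := by
    rw [Function.extend_apply' _ _ _ fun ⟨K, hK⟩ => b.2 (hK ▸ K.2), Pi.zero_apply, hG]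
  rw [← Fintype.sum_subtype_add_sum_subtype p]
  simp only [hout, Subtype.val_injective.extend_apply, sum_const_zero, add_zero]

theorem incMat_transpose_injective {n k t : ℕ} (ht : 0 < t) (htk : t ≤ k) :
    Function.Injective (incMat ℝ n k t)ᵀ := by
  intro K L hKL
  refine Subtype.ext (eq_of_subset_of_card_le (fun i hi => ?_) (by rw [K.2, L.2]))
  obtain ⟨U, hiU, hUK, hU⟩ := exists_subsuperset_card_eq (singleton_subset_iff.2 hi)
    (by rwa [card_singleton]) (K.2 ▸ htk)
  have hUL := congrFun hKL ⟨U, hU⟩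
  simp only [Matrix.transpose_apply, incMat, if_pos hUK] at hUL
  exact (of_not_not fun h => one_ne_zero (hUL.trans (if_neg h))) (singleton_subset_iff.1 hiU)

theorem two_pow_le_card_pos_of_incMat_mulVec_eq_zero {n k t : ℕ} (htk : t ≤ k)
    {d : {K : Finset (Fin n) // #K = k} → ℝ} (hd : incMat ℝ n k t *ᵥ d = 0) (hne : d ≠ 0) :
    2 ^ t ≤ #{K | 0 < d K} := by
  set ν := Function.extend Subtype.val d 0
  have hν_card (A : Finset (Fin n)) (_ : A ⊆ univ) (hA : ν A ≠ 0) : #A = k := by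
    by_contra hAk
    exact hA (Function.extend_apply' _ _ _ fun ⟨K, hK⟩ => hAk (hK ▸ K.2))
  have hmom (T : Finset (Fin n)) (_ : T ⊆ univ) (hT : #T = t) :
      ∑ A ∈ univ.powerset with T ⊆ A, ν A = 0 := by
    rw [powerset_univ, sum_filter,
      sum_extend_subtype_val d (fun A y => if T ⊆ A then y else 0) fun _ => ite_self 0]
    simpa [mulVec, dotProduct, incMat] using congrFun hd ⟨T, hT⟩
  have hν : ∃ A ∈ univ.powerset, ν A ≠ 0 := by
    obtain ⟨K, hK⟩ := Function.ne_iff.1 hne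
    exact ⟨K, mem_powerset.2 (subset_univ _),
      (Subtype.val_injective.extend_apply d 0 K).trans_ne hK⟩
  have := two_pow_le_card_pos_of_moments_eq_zero (moments_eq_zero_of_card_le hν_card htk hmom) hν
  rwa [powerset_univ, card_filter,
    sum_extend_subtype_val d (fun _ y => if 0 < y then 1 else 0) fun _ => by simp,
    ← card_filter] at this

theorem eq_of_incMat_mulVec_eq {n k t : ℕ} (htk : t ≤ k)
    {u w : {K : Finset (Fin n) // #K = k} → ℝ} (hw : ∀ K, 0 ≤ w K)
    (hu : #{K | 0 < u K} < 2 ^ t) (h : incMat ℝ n k t *ᵥ u = incMat ℝ n k t *ᵥ w) : u = w := by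
  by_contra hne
  have hpos := two_pow_le_card_pos_of_incMat_mulVec_eq_zero htk (d := u - w)
    (by rw [mulVec_sub, h, sub_self]) (sub_ne_zero.2 hne)
  have hsub : #{K | 0 < (u - w) K} ≤ #{K | 0 < u K} :=
    card_le_card fun K hK => by
      rw [mem_filter] at hK ⊢
      exact ⟨hK.1, (hw K).trans_lt (sub_pos.1 hK.2)⟩
  omega

theorem stmt_7_general (n k t : ℕ) (ht : 0 < t) (htk : t < k)
    (V : Set ({T : Finset (Fin n) // T.card = t} → ℝ))
    (hV : V = Set.range fun K : {K : Finset (Fin n) // K.card = k} =>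
      fun T => incMat ℝ n k t T K)
    (S : Finset ({T : Finset (Fin n) // T.card = t} → ℝ))
    (hSV : (S : Set _) ⊆ V) (hcard : S.card ≤ 2 ^ t - 1) :
    IsExtreme ℝ (convexHull ℝ V) (convexHull ℝ (S : Set _)) := by
  classical
  set A := incMat ℝ n k t
  obtain rfl : V = Set.range Aᵀ := hV
  set I : Finset _ := {K | Aᵀ K ∈ S}
  have hSI : (S : Set _) = Aᵀ '' I := by
    ext y
    refine ⟨fun hy => ?_, fun ⟨K, hK, hKy⟩ => hKy ▸ (mem_filter.1 hK).2⟩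
    obtain ⟨K, rfl⟩ := hSV hy
    exact ⟨K, mem_filter.2 ⟨mem_univ K, hy⟩, rfl⟩
  have hI : #I < 2 ^ t := (card_le_card_of_injOn Aᵀ (fun K hK => (mem_filter.1 hK).2)
    (incMat_transpose_injective ht htk.le).injOn).trans_lt
      (by have := Nat.one_le_two_pow (n := t); omega)
  rw [hSI]
  refine isExtreme_convexHull_image_of_weights Aᵀ I fun u w _ huI hw huw K hK => ?_
  rw [← vecMul_eq_sum, ← vecMul_eq_sum, vecMul_transpose, vecMul_transpose] at huw
  have hupos : #{K | 0 < u K} < 2 ^ t :=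
    (card_le_card fun K hK => of_not_not fun hKI =>
      (mem_filter.1 hK).2.ne' (huI K hKI)).trans_lt hI
  rw [← eq_of_incMat_mulVec_eq htk.le hw hupos huw.symm, huI K hK]

/-- The polytope `𝒫_{n,k,t}`, the convex hull of the columns of `𝒜_{n,k,t}`, is
`(2^t − 1)`-neighborly: the convex hull of any set of at most `2^t − 1` of its
vertices (columns) is a face, i.e. an extreme subset, of `𝒫_{n,k,t}`. -/
theorem stmt_7 (n k t : ℕ) (ht : 0 < t) (htk : t < k) (hkn : k ≤ n)
    (V : Set ({T : Finset (Fin n) // T.card = t} → ℝ))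
    (hV : V = Set.range fun K : {K : Finset (Fin n) // K.card = k} =>
      fun T => incMat ℝ n k t T K)
    (S : Finset ({T : Finset (Fin n) // T.card = t} → ℝ))
    (hSV : (S : Set _) ⊆ V) (hcard : S.card ≤ 2 ^ t - 1) :
    IsExtreme ℝ (convexHull ℝ V) (convexHull ℝ (S : Set _)) :=
  stmt_7_general n k t ht htk V hV S hSV hcard
end

section
/- Let 0 < k ≤ n be integers, let r = min(binom(n,k−1), binom(n,k)), and let p be a prime with p ≤ min(k, n−k+1). Then p divides the determinant of every r × r square submatrix of the incidence matrix 𝒜_{n,k,k−1}; equivalently, p divides the greatest common divisor of the nonzero maximal minors of 𝒜_{n,k,k−1}, and hence p divides the normalized Euclidean volume of every full-dimensional simplex whose vertices are columns of 𝒜_{n,k,k−1}. -/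
open Finset Matrix

theorem Finset.card_filter_subset_and_subset {α : Type*} [Fintype α] [DecidableEq α]
    (A C : Finset α) {m : ℕ} (hm : #A ≤ m) :
    #{s : {s : Finset α // #s = m} | A ⊆ s.1 ∧ s.1 ⊆ C} =
      if A ⊆ C then (#C - #A).choose (m - #A) else 0 := by
  split_ifs with hAC
  · rw [← card_filter_powersetCard_subset A C m hAC hm]
    refine card_bij (fun s _ => s.1) ?_ (fun _ _ _ _ => Subtype.ext) ?_
    · intro s hs
      simp only [mem_filter, mem_univ, true_and] at hs
      simp [mem_powersetCard, hs.1, hs.2, s.2]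
    · intro s hs
      simp only [mem_filter, mem_powersetCard] at hs
      exact ⟨⟨s, hs.1.2⟩, by simp [hs.1.1, hs.2], rfl⟩
  · rw [card_eq_zero, filter_eq_empty_iff]
    exact fun s _ h => hAC (h.1.trans h.2)

theorem Matrix.rank_lt_card_width_of_mulVec_eq_zero {m l F : Type*} [Fintype l] [Field F]
    (A : Matrix m l F) {v : l → F} (hv : v ≠ 0) (hAv : A *ᵥ v = 0) :
    A.rank < Fintype.card l := by
  have hker : Nontrivial (LinearMap.ker A.mulVecLin) :=
    ⟨⟨⟨v, hAv⟩, 0, fun h => hv (congrArg Subtype.val h)⟩⟩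
  have hrank_nullity := A.mulVecLin.finrank_range_add_finrank_ker
  rw [Module.finrank_fintype_fun_eq_card] at hrank_nullity
  have hnullity := Module.finrank_pos (R := F) (M := LinearMap.ker A.mulVecLin)
  rw [Matrix.rank]
  omega

theorem Matrix.rank_lt_card_height_of_vecMul_eq_zero {m l F : Type*} [Fintype m] [Fintype l]
    [Field F] (A : Matrix m l F) {w : m → F} (hw : w ≠ 0) (hwA : w ᵥ* A = 0) :
    A.rank < Fintype.card m := by
  rw [← rank_transpose]
  exact Aᵀ.rank_lt_card_width_of_mulVec_eq_zero hw
    (by rwa [← vecMul_transpose, transpose_transpose])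

theorem Matrix.det_submatrix_eq_zero_of_rank_lt {m l ι F : Type*} [Fintype m] [Fintype l]
    [Fintype ι] [DecidableEq ι] [Field F] (A : Matrix m l F) (f : ι → m) (g : ι → l)
    (h : A.rank < Fintype.card ι) : (A.submatrix f g).det = 0 := by
  by_contra hdet
  have := (A.rank_submatrix_le f g).trans_lt h
  rw [rank_of_det_ne_zero hdet] at this
  exact this.false

theorem incMat_map_s10 {R S : Type*} [Zero R] [One R] [Zero S] [One S] {n k t : ℕ} {φ : R → S}
    (h0 : φ 0 = 0) (h1 : φ 1 = 1) : (incMat R n k t).map φ = incMat S n k t := by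
  ext T K
  simp [incMat, apply_ite φ, h0, h1]

section incMat

variable {R : Type*} [NonAssocSemiring R] {n k t p : ℕ}

theorem incMat_mulVec_indicator_subset (htk : t ≤ k) (U : Finset (Fin n))
    (T : {T : Finset (Fin n) // #T = t}) :
    (incMat R n k t *ᵥ fun K => if K.1 ⊆ U then 1 else 0) T =
      if T.1 ⊆ U then ((#U - t).choose (k - t) : R) else 0 := by
  have := card_filter_subset_and_subset T.1 U (m := k) (by rwa [T.2])
  rw [T.2] at this
  simp only [mulVec, dotProduct, incMat, ite_zero_mul_ite_zero, one_mul]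
  rw [sum_boole, this]
  split_ifs <;> simp

theorem indicator_superset_vecMul_incMat (B : Finset (Fin n)) (hBt : #B ≤ t)
    (K : {K : Finset (Fin n) // #K = k}) :
    ((fun T => if B ⊆ T.1 then 1 else 0) ᵥ* incMat R n k t) K =
      if B ⊆ K.1 then ((k - #B).choose (t - #B) : R) else 0 := by
  have := card_filter_subset_and_subset B K.1 (m := t) hBt
  rw [K.2] at this
  simp only [vecMul, dotProduct, incMat, ite_zero_mul_ite_zero, one_mul]
  rw [sum_boole, this]
  split_ifs <;> simp

theorem incMat_mulVec_indicator_subset_eq_zero (hk : 0 < k) (hpR : (p : R) = 0)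
    {U : Finset (Fin n)} (hU : #U = k - 1 + p) :
    incMat R n k (k - 1) *ᵥ (fun K => if K.1 ⊆ U then 1 else 0) = 0 := by
  ext T
  rw [incMat_mulVec_indicator_subset (Nat.sub_le k 1), hU, Nat.add_sub_cancel_left,
    Nat.sub_sub_self hk, Nat.choose_one_right, hpR, ite_self, Pi.zero_apply]

theorem indicator_superset_vecMul_incMat_eq_zero (hp : 0 < p) (hpR : (p : R) = 0)
    {B : Finset (Fin n)} (hB : #B + p = k) :
    (fun T => if B ⊆ T.1 then 1 else 0) ᵥ* incMat R n k (k - 1) = 0 := by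
  ext K
  have hchoose : (k - #B).choose (k - 1 - #B) = p := by
    rw [show k - #B = p by omega, show k - 1 - #B = p - 1 by omega, Nat.choose_symm hp,
      Nat.choose_one_right]
  rw [indicator_superset_vecMul_incMat B (by omega), hchoose, hpR, ite_self, Pi.zero_apply]

end incMat

theorem rank_incMat_lt_min {n k p : ℕ} [Fact p.Prime] (hpk : p ≤ k) (hpn : p ≤ n - k + 1) :
    (incMat (ZMod p) n k (k - 1)).rank < min (n.choose (k - 1)) (n.choose k) := by
  have hp2 := (Fact.out : p.Prime).two_le
  obtain ⟨U, -, hU⟩ := exists_subset_card_eq (s := (univ : Finset (Fin n))) (n := k - 1 + p)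
    (by simp; omega)
  obtain ⟨K, hKU, hK⟩ := exists_subset_card_eq (s := U) (n := k) (by omega)
  obtain ⟨B, -, hB⟩ := exists_subset_card_eq (s := (univ : Finset (Fin n))) (n := k - p)
    (by simp; omega)
  obtain ⟨T, hBT, hT⟩ := exists_superset_card_eq (s := B) (n := k - 1) (by omega) (by simp; omega)
  have hcols := (incMat (ZMod p) n k (k - 1)).rank_lt_card_width_of_mulVec_eq_zero
    (fun h => by simpa [hKU] using congrFun h ⟨K, hK⟩)
    (incMat_mulVec_indicator_subset_eq_zero (by omega) (ZMod.natCast_self p) hU)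
  have hrows := (incMat (ZMod p) n k (k - 1)).rank_lt_card_height_of_vecMul_eq_zero
    (fun h => by simpa [hBT] using congrFun h ⟨T, hT⟩)
    (indicator_superset_vecMul_incMat_eq_zero (by omega) (ZMod.natCast_self p)
      (by omega : #B + p = k))
  simp only [Fintype.card_finset_len, Fintype.card_fin] at hcols hrows
  exact lt_min hrows hcols

theorem stmt_10_general (n k : ℕ)
    (p : ℕ) (hp : p.Prime) (hple : p ≤ min k (n - k + 1))
    (r : ℕ) (hr : r = min (n.choose (k - 1)) (n.choose k))
    (f : Fin r → {T : Finset (Fin n) // T.card = k - 1})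
    (g : Fin r → {K : Finset (Fin n) // K.card = k}) :
    (p : ℤ) ∣ ((incMat ℤ n k (k - 1)).submatrix f g).det := by
  have : Fact p.Prime := ⟨hp⟩
  rw [← ZMod.intCast_zmod_eq_zero_iff_dvd, Int.cast_det, ← submatrix_map,
    incMat_map_s10 Int.cast_zero Int.cast_one]
  apply det_submatrix_eq_zero_of_rank_lt
  rw [Fintype.card_fin, hr]
  exact rank_incMat_lt_min (le_min_iff.mp hple).1 (le_min_iff.mp hple).2

/-- Let `0 < k ≤ n`, `r = min(binom(n,k−1), binom(n,k))`, and let `p` be a prime with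
`p ≤ min(k, n−k+1)`. Then `p` divides the determinant of every `r × r` square
submatrix of the incidence matrix `𝒜_{n,k,k−1}`. -/
theorem stmt_10 (n k : ℕ) (hk : 0 < k) (hkn : k ≤ n)
    (p : ℕ) (hp : p.Prime) (hple : p ≤ min k (n - k + 1))
    (r : ℕ) (hr : r = min (n.choose (k - 1)) (n.choose k))
    (f : Fin r → {T : Finset (Fin n) // T.card = k - 1})
    (g : Fin r → {K : Finset (Fin n) // K.card = k})
    (hf : Function.Injective f) (hg : Function.Injective g) :
    (p : ℤ) ∣ ((incMat ℤ n k (k - 1)).submatrix f g).det :=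
  stmt_10_general n k p hp hple r hr f g
end

section
/- Let n ≥ 2 and let σ be a derangement of {1,…,n}. Then the map φ : H_n → G_n is not injective when derangements with a cycle of length ≥ 3 exist; more precisely, |{τ ∈ H_n : φ(τ) = φ(σ)}| = 2^{t(σ) − s(σ)}, where t(σ) is the number of cycles in the disjoint cycle decomposition of σ (the cardinality of the cycle type of σ) and s(σ) is the number of cycles of σ of length exactly 2. -/
attribute [local instance] Classical.propDecidable

/-- `G_n` is realized additively as the group of `ℤ`-valued functions on unordered
pairs from `{1,…,n}`; `pgen n i j` is the generator `p_{i,j} = p_{j,i}`. -/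
noncomputable def pgen (n : ℕ) (i j : Fin n) : Sym2 (Fin n) → ℤ :=
  Pi.single s(i, j) 1

/-- `φ(σ) = ∏_i p_{i,σ(i)}` (written additively). -/
noncomputable def phi (n : ℕ) (σ : Equiv.Perm (Fin n)) : Sym2 (Fin n) → ℤ :=
  ∑ i : Fin n, pgen n i (σ i)

/-!
If `φ(τ) = φ(σ)`, every edge `{i, τ i}` is an edge `{j, σ j}`, so `τ i ∈ {σ i, σ⁻¹ i}`. On a cycle
of `σ` of length at least 3, `τ` cannot change direction: the edge `{i, σ i}` occurs once in `φ(σ)`,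
but would occur twice in `φ(τ)`. Hence `τ` arises from `σ` by reversing some of its cycles, and any
such reversal has the same image; reversing a 2-cycle changes nothing, so the fiber is in bijection
with the sets of cycles of length at least 3.
-/

open Finset

namespace Equiv.Perm

variable {α : Type*} [Fintype α] [DecidableEq α]

theorem cycleOf_inv_apply_self (σ : Perm α) (x : α) : σ.cycleOf (σ⁻¹ x) = σ.cycleOf x :=
  (sameCycle_symm_apply_left.mpr (SameCycle.refl σ x)).cycleOf_eq

theorem apply_apply_eq_self_iff_card_support_cycleOf {σ : Perm α} {x : α} (hx : σ x ≠ x) :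
    σ (σ x) = x ↔ #(σ.cycleOf x).support = 2 := by
  have hc := σ.isCycle_cycleOf hx
  constructor
  · intro h
    have hsq : σ.cycleOf x ^ 2 = 1 :=
      (hc.pow_eq_one_iff' (by rwa [cycleOf_apply_self])).mpr
        (by rw [cycleOf_pow_apply_self, sq, mul_apply, h])
    have := Nat.le_of_dvd two_pos (hc.orderOf ▸ orderOf_dvd_of_pow_eq_one hsq)
    have := hc.two_le_card_support
    omega
  · intro h
    rw [← mul_apply, ← sq, ← pow_mod_card_support_cycleOf_self_apply, h, Nat.mod_self, pow_zero,
      one_apply]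

theorem card_filter_cycleFactorsFinset_card_support_ne_two (σ : Perm α) :
    #{c ∈ σ.cycleFactorsFinset | #c.support ≠ 2} =
      Multiset.card σ.cycleType - σ.cycleType.count 2 := by
  rw [cycleType_def, Multiset.count, Multiset.card_eq_countP_add_countP (2 = ·),
    Nat.add_sub_cancel_left, Multiset.countP_map]
  simp only [Finset.card, Finset.filter_val, Function.comp_apply, eq_comm, ne_eq]
  rfl

def reverseCycles (σ : Perm α) (S : Finset (Perm α)) : Perm α where
  toFun x := if σ.cycleOf x ∈ S then σ⁻¹ x else σ x
  invFun x := if σ.cycleOf x ∈ S then σ x else σ⁻¹ x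
  left_inv x := by
    by_cases h : σ.cycleOf x ∈ S <;>
      simp only [h, if_true, if_false, cycleOf_inv_apply_self, cycleOf_self_apply] <;> simp
  right_inv x := by
    by_cases h : σ.cycleOf x ∈ S <;>
      simp only [h, if_true, if_false, cycleOf_inv_apply_self, cycleOf_self_apply] <;> simp

theorem reverseCycles_apply (σ : Perm α) (S : Finset (Perm α)) (x : α) :
    σ.reverseCycles S x = if σ.cycleOf x ∈ S then σ⁻¹ x else σ x :=
  rfl

theorem reverseCycles_apply_ne_self {σ : Perm α} (hσ : ∀ x, σ x ≠ x) (S : Finset (Perm α))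
    (x : α) : σ.reverseCycles S x ≠ x := by
  rw [reverseCycles_apply]
  split_ifs
  · exact fun h => hσ x (inv_eq_iff_eq.mp h).symm
  · exact hσ x

def diffCycles (σ τ : Perm α) : Finset (Perm α) :=
  {c ∈ σ.cycleFactorsFinset | ∃ x ∈ c.support, τ x ≠ σ x}

theorem mem_diffCycles {σ τ c : Perm α} :
    c ∈ diffCycles σ τ ↔ c ∈ σ.cycleFactorsFinset ∧ ∃ x ∈ c.support, τ x ≠ σ x :=
  mem_filter

theorem diffCycles_reverseCycles {σ : Perm α} {S : Finset (Perm α)}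
    (hS : S ⊆ {c ∈ σ.cycleFactorsFinset | #c.support ≠ 2}) :
    diffCycles σ (σ.reverseCycles S) = S := by
  ext c
  simp only [mem_diffCycles, reverseCycles_apply]
  constructor
  · rintro ⟨hc, x, hx, hne⟩
    rw [← cycle_is_cycleOf hx hc] at hne
    by_contra hcS
    exact hne (if_neg hcS)
  · intro hcS
    obtain ⟨hc, hlong⟩ := mem_filter.mp (hS hcS)
    obtain ⟨x, hx⟩ := (mem_cycleFactorsFinset_iff.mp hc).1.nonempty_support
    have hσx : σ x ≠ x := mem_support.mp (mem_cycleFactorsFinset_support_le hc hx)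
    have hcx := cycle_is_cycleOf hx hc
    refine ⟨hc, x, hx, ?_⟩
    rw [← hcx, if_pos hcS]
    intro h
    rw [hcx] at hlong
    exact hlong ((apply_apply_eq_self_iff_card_support_cycleOf hσx).mp (inv_eq_iff_eq.mp h).symm)

end Equiv.Perm

open Equiv Perm

section Fiber

variable {n : ℕ}

theorem pgen_comm (i j : Fin n) : pgen n i j = pgen n j i := by
  rw [pgen, pgen, Sym2.eq_swap]

theorem phi_apply (σ : Perm (Fin n)) (e : Sym2 (Fin n)) :
    phi n σ e = #{i | s(i, σ i) = e} := by
  simp [phi, pgen, Finset.sum_apply, Pi.single_apply, eq_comm]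

theorem phi_inv (σ : Perm (Fin n)) : phi n σ⁻¹ = phi n σ :=
  Fintype.sum_equiv σ⁻¹ _ _ fun i => by simp [pgen_comm i]

theorem phi_reverseCycles (σ : Perm (Fin n)) (S : Finset (Perm (Fin n))) :
    phi n (σ.reverseCycles S) = phi n σ := by
  have hback : ∑ i with σ.cycleOf i ∈ S, pgen n i (σ⁻¹ i) =
      ∑ i with σ.cycleOf i ∈ S, pgen n i (σ i) :=
    sum_equiv σ⁻¹ (by simp only [mem_filter, mem_univ, true_and, cycleOf_inv_apply_self,
      implies_true]) fun i _ => by simp [pgen_comm i]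
  calc phi n (σ.reverseCycles S)
      = ∑ i with σ.cycleOf i ∈ S, pgen n i (σ⁻¹ i) + ∑ i with σ.cycleOf i ∉ S, pgen n i (σ i) := by
        rw [phi, ← sum_ite]
        exact sum_congr rfl fun i _ => by rw [reverseCycles_apply]; split_ifs <;> rfl
    _ = phi n σ := by rw [hback, sum_filter_add_sum_filter_not, phi]

variable {σ τ : Perm (Fin n)}

theorem apply_eq_or_apply_eq_inv_of_phi_eq (hφ : phi n τ = phi n σ) (i : Fin n) :
    τ i = σ i ∨ τ i = σ⁻¹ i := by
  have hpos : 0 < #{j | s(j, σ j) = s(i, τ i)} := by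
    have := congrFun hφ s(i, τ i)
    rw [phi_apply, phi_apply] at this
    have : 0 < #{j | s(j, τ j) = s(i, τ i)} := card_pos.mpr ⟨i, by simp⟩
    omega
  obtain ⟨j, hj⟩ := card_pos.mp hpos
  rcases Sym2.eq_iff.mp (mem_filter.mp hj).2 with ⟨rfl, h⟩ | ⟨rfl, h⟩
  · exact Or.inl h.symm
  · exact Or.inr (eq_inv_iff_eq.mpr h)

theorem apply_apply_eq_of_phi_eq (hσ : ∀ i, σ i ≠ i) (hφ : phi n τ = phi n σ) {i : Fin n}
    (hi : σ (σ i) ≠ i) (hτ : τ i = σ i) : τ (σ i) = σ (σ i) := by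
  refine (apply_eq_or_apply_eq_inv_of_phi_eq hφ (σ i)).resolve_right fun hback => ?_
  simp only [coe_inv, symm_apply_apply] at hback
  -- `σ` traverses the edge `{i, σ i}` once, but `τ` traverses it twice
  have hσe : #{j | s(j, σ j) = s(i, σ i)} ≤ 1 := by
    have hmem : ∀ j ∈ ({j | s(j, σ j) = s(i, σ i)} : Finset _), j = i := fun j hj => by
      rcases Sym2.eq_iff.mp (mem_filter.mp hj).2 with ⟨rfl, -⟩ | ⟨rfl, h⟩
      · rfl
      · exact absurd h hi
    exact card_le_one.mpr fun a ha b hb => (hmem a ha).trans (hmem b hb).symm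
  have hτe : 2 ≤ #{j | s(j, τ j) = s(i, σ i)} := by
    rw [← card_pair (hσ i).symm]
    refine card_le_card fun j hj => ?_
    rcases mem_insert.mp hj with rfl | hj
    · simp [hτ]
    · simp [mem_singleton.mp hj, hback]
  have := congrFun hφ s(i, σ i)
  rw [phi_apply, phi_apply] at this
  omega

theorem apply_eq_of_sameCycle_of_phi_eq (hσ : ∀ i, σ i ≠ i) (hφ : phi n τ = phi n σ)
    {x y : Fin n} (hxy : σ.SameCycle x y) (hx2 : σ (σ x) ≠ x) (hx : τ x = σ x) : τ y = σ y := by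
  obtain ⟨k, -, rfl⟩ := hxy.exists_pow_eq'
  clear hxy
  induction k with
  | zero => exact hx
  | succ k ih =>
    have hk2 : σ (σ ((σ ^ k) x)) ≠ (σ ^ k) x := by
      rw [← mul_apply, ← mul_apply, ← sq, ← pow_mul_comm, mul_apply, sq, mul_apply]
      exact (σ ^ k).injective.ne hx2
    simpa only [pow_succ', mul_apply] using apply_apply_eq_of_phi_eq hσ hφ hk2 ih

theorem apply_eq_inv_apply_of_sameCycle_of_phi_eq (hσ : ∀ i, σ i ≠ i) (hφ : phi n τ = phi n σ)
    {x y : Fin n} (hxy : σ.SameCycle x y) (hx2 : σ (σ x) ≠ x) (hx : τ x = σ⁻¹ x) :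
    τ y = σ⁻¹ y := by
  refine apply_eq_of_sameCycle_of_phi_eq (fun i h => hσ i (inv_eq_iff_eq.mp h).symm)
    (by rw [phi_inv, hφ]) (sameCycle_inv.mpr hxy) (fun h => hx2 ?_) hx
  rw [inv_eq_iff_eq, inv_eq_iff_eq] at h
  exact h.symm

theorem apply_eq_inv_apply_and_apply_apply_ne_of_phi_eq (hφ : phi n τ = phi n σ) {x : Fin n}
    (hx : τ x ≠ σ x) :
    τ x = σ⁻¹ x ∧ σ (σ x) ≠ x := by
  have hinv := (apply_eq_or_apply_eq_inv_of_phi_eq hφ x).resolve_left hx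
  refine ⟨hinv, fun h => hx ?_⟩
  rw [hinv, inv_eq_iff_eq, h]

theorem diffCycles_subset_of_phi_eq (hφ : phi n τ = phi n σ) :
    diffCycles σ τ ⊆ {c ∈ σ.cycleFactorsFinset | #c.support ≠ 2} := by
  intro c hc
  obtain ⟨hcσ, x, hx, hne⟩ := mem_diffCycles.mp hc
  have hσx : σ x ≠ x := mem_support.mp (mem_cycleFactorsFinset_support_le hcσ hx)
  obtain rfl := cycle_is_cycleOf hx hcσ
  have hx2 := (apply_eq_inv_apply_and_apply_apply_ne_of_phi_eq hφ hne).2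
  exact mem_filter.mpr
    ⟨hcσ, fun h2 => hx2 ((apply_apply_eq_self_iff_card_support_cycleOf hσx).mpr h2)⟩

theorem reverseCycles_diffCycles_of_phi_eq (hσ : ∀ i, σ i ≠ i) (hφ : phi n τ = phi n σ) :
    σ.reverseCycles (diffCycles σ τ) = τ := by
  refine Equiv.ext fun x => ?_
  have hxc : x ∈ (σ.cycleOf x).support :=
    mem_support_cycleOf_iff.mpr ⟨SameCycle.refl σ x, mem_support.mpr (hσ x)⟩
  rw [reverseCycles_apply]
  split_ifs with h
  · obtain ⟨-, y, hy, hne⟩ := mem_diffCycles.mp h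
    obtain ⟨hy_inv, hy2⟩ := apply_eq_inv_apply_and_apply_apply_ne_of_phi_eq hφ hne
    exact (apply_eq_inv_apply_of_sameCycle_of_phi_eq hσ hφ
      (mem_support_cycleOf_iff.mp hy).1.symm hy2 hy_inv).symm
  · have hcσ : σ.cycleOf x ∈ σ.cycleFactorsFinset :=
      cycleOf_mem_cycleFactorsFinset_iff.mpr (mem_support.mpr (hσ x))
    by_contra hne
    exact h (mem_diffCycles.mpr ⟨hcσ, x, hxc, Ne.symm hne⟩)

end Fiber

theorem stmt_11_general (n : ℕ) (σ : Equiv.Perm (Fin n))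
    (hσ : ∀ i, σ i ≠ i) :
    (Finset.univ.filter fun τ : Equiv.Perm (Fin n) =>
        (∀ i, τ i ≠ i) ∧ phi n τ = phi n σ).card
      = 2 ^ (Multiset.card σ.cycleType - σ.cycleType.count 2) := by
  rw [← card_filter_cycleFactorsFinset_card_support_ne_two, ← card_powerset]
  refine card_nbij' (diffCycles σ) σ.reverseCycles ?_ ?_ ?_ ?_
  · intro τ hτ
    simp only [mem_coe, mem_filter, mem_univ, true_and] at hτ
    exact mem_powerset.mpr (diffCycles_subset_of_phi_eq hτ.2)
  · intro S _
    simp only [mem_coe, mem_filter, mem_univ, true_and]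
    exact ⟨reverseCycles_apply_ne_self hσ S, phi_reverseCycles σ S⟩
  · intro τ hτ
    simp only [mem_coe, mem_filter, mem_univ, true_and] at hτ
    exact reverseCycles_diffCycles_of_phi_eq hσ hτ.2
  · intro S hS
    exact diffCycles_reverseCycles (mem_powerset.mp hS)

/-- For a derangement `σ` of `{1,…,n}`, the number of derangements `τ` with
`φ(τ) = φ(σ)` is `2^{t(σ) − s(σ)}`, where `t(σ)` is the number of cycles of `σ`
and `s(σ)` the number of cycles of length exactly `2`. In particular `φ` is not
injective on derangements whenever a derangement has a cycle of length `≥ 3`. -/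
theorem stmt_11 (n : ℕ) (hn : 2 ≤ n) (σ : Equiv.Perm (Fin n))
    (hσ : ∀ i, σ i ≠ i) :
    (Finset.univ.filter fun τ : Equiv.Perm (Fin n) =>
        (∀ i, τ i ≠ i) ∧ phi n τ = phi n σ).card
      = 2 ^ (Multiset.card σ.cycleType - σ.cycleType.count 2) :=
  stmt_11_general n σ hσ
end

section
/- Let n ≥ 5. (a) For every derangement σ of {1,…,n} whose disjoint cycle decomposition has t(σ) ≥ 2 cycles, there exists a derangement σ̄ with exactly t(σ) − 1 cycles such that φ(σ)·φ(σ̄)^{−1} ∈ C_n. (b) For any two derangements σ₁, σ₂ of {1,…,n}, φ(σ₁)·φ(σ₂)^{−1} ∈ C_n, i.e., the images of all derangements under φ lie in a single coset of C_n in G_n. -/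
/-!
There is `t : Fin n → G_n` with `p_{i,j} ≡ -(t i + t j)` modulo `C_n` for all `i ≠ j`. Fix a
base point `o`; `t i = p_{i,o}` works for `i, j ≠ o` by the relation `c_{i,j,o}`. For
`t o = -2 p_{o',o}` one needs `2 p_{j,o} ≡ 2 p_{o',o}`; summing four triangle relations gives
`2 p_{a,b} ≡ 2 p_{c,d}` for disjoint pairs, and for `n ≥ 5` the pairs `{j,o}` and `{o',o}` are
both disjoint from a third pair. Then `φ(σ) ≡ -∑ (t i + t (σ i)) = -2 ∑ t i` for every
derangement, which is (b). Part (a) follows from (b): merging two cycle lengths of `σ` gives the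
cycle type of a derangement with one cycle fewer.
-/

attribute [local instance] Classical.propDecidable

/-- The subgroup `C_n ≤ G_n` generated by the elements
`c_{i,j,k} = p_{i,j}·p_{j,k}·p_{i,k}` for pairwise distinct `i,j,k`. -/
noncomputable def Cgrp (n : ℕ) : AddSubgroup (Sym2 (Fin n) → ℤ) :=
  AddSubgroup.closure {x | ∃ i j k : Fin n, i ≠ j ∧ j ≠ k ∧ i ≠ k ∧
    x = pgen n i j + pgen n j k + pgen n i k}

open Equiv Finset

section Derangement

variable {α : Type*} [Fintype α] [DecidableEq α]

theorem Equiv.Perm.sum_cycleType_eq_card_iff {σ : Perm α} :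
    σ.cycleType.sum = Fintype.card α ↔ ∀ x, σ x ≠ x := by
  rw [Perm.sum_cycleType, card_eq_iff_eq_univ, eq_univ_iff_forall]
  simp only [Perm.mem_support]

theorem Equiv.Perm.exists_derangement_card_cycleType_eq_sub_one {σ : Perm α}
    (hσ : ∀ x, σ x ≠ x) (h : 2 ≤ Multiset.card σ.cycleType) :
    ∃ τ : Perm α, (∀ x, τ x ≠ x) ∧
      Multiset.card τ.cycleType = Multiset.card σ.cycleType - 1 := by
  obtain ⟨l₁, l₂, r, hσr⟩ : ∃ l₁ l₂ r, σ.cycleType = l₁ ::ₘ l₂ ::ₘ r := by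
    obtain ⟨l₁, hl₁⟩ :=
      Multiset.card_pos_iff_exists_mem.1 (show 0 < Multiset.card σ.cycleType by omega)
    obtain ⟨r₁, hr₁⟩ := Multiset.exists_cons_of_mem hl₁
    obtain ⟨l₂, hl₂⟩ := Multiset.card_pos_iff_exists_mem.1
      (show 0 < Multiset.card r₁ by rw [hr₁, Multiset.card_cons] at h; omega)
    obtain ⟨r, rfl⟩ := Multiset.exists_cons_of_mem hl₂
    exact ⟨l₁, l₂, r, hr₁⟩
  have hσsum := Perm.sum_cycleType_eq_card_iff.2 hσ
  have htwo : ∀ a ∈ σ.cycleType, 2 ≤ a := fun _ => Perm.two_le_of_mem_cycleType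
  rw [hσr] at hσsum htwo
  simp only [Multiset.sum_cons, Multiset.mem_cons, forall_eq_or_imp] at hσsum htwo
  obtain ⟨τ, hτ⟩ : ∃ τ : Perm α, τ.cycleType = (l₁ + l₂) ::ₘ r := by
    refine (Perm.exists_with_cycleType_iff α).2 ⟨?_, ?_⟩
    · rw [Multiset.sum_cons]
      omega
    · simp only [Multiset.mem_cons, forall_eq_or_imp]
      exact ⟨by omega, htwo.2.2⟩
  refine ⟨τ, Perm.sum_cycleType_eq_card_iff.1 ?_, ?_⟩
  · rw [hτ, Multiset.sum_cons]
    omega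
  · simp [hτ, hσr]

end Derangement

namespace Cgrp

variable {n : ℕ}

theorem pgen_comm (i j : Fin n) : pgen n i j = pgen n j i := by
  rw [pgen, pgen, Sym2.eq_swap]

theorem triangle_mem {i j k : Fin n} (hij : i ≠ j) (hjk : j ≠ k) (hik : i ≠ k) :
    pgen n i j + pgen n j k + pgen n i k ∈ Cgrp n :=
  AddSubgroup.subset_closure ⟨i, j, k, hij, hjk, hik, rfl⟩

theorem two_nsmul_pgen_sub_mem_of_disjoint {a b c d : Fin n} (hab : a ≠ b) (hac : a ≠ c)
    (had : a ≠ d) (hbc : b ≠ c) (hbd : b ≠ d) (hcd : c ≠ d) :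
    2 • pgen n a b - 2 • pgen n c d ∈ Cgrp n := by
  have key : 2 • pgen n a b - 2 • pgen n c d =
      (pgen n a b + pgen n b c + pgen n a c) + (pgen n a b + pgen n b d + pgen n a d)
        - (pgen n a c + pgen n c d + pgen n a d) - (pgen n b c + pgen n c d + pgen n b d) := by
    abel
  rw [key]
  exact sub_mem (sub_mem (add_mem (triangle_mem hab hbc hac) (triangle_mem hab hbd had))
    (triangle_mem hac hcd had)) (triangle_mem hbc hcd hbd)

theorem two_nsmul_pgen_sub_mem (hn : 5 ≤ n) {a b c : Fin n} (hac : a ≠ c) (hbc : b ≠ c) :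
    2 • pgen n a c - 2 • pgen n b c ∈ Cgrp n := by
  have hcard : 1 < #(univ \ {a, b, c} : Finset (Fin n)) := by
    have := le_card_sdiff {a, b, c} (univ : Finset (Fin n))
    have := card_le_three (a := a) (b := b) (c := c)
    rw [card_univ, Fintype.card_fin] at *
    omega
  obtain ⟨k, hk, l, hl, hkl⟩ := one_lt_card.1 hcard
  simp only [mem_sdiff, mem_univ, mem_insert, mem_singleton, true_and, not_or] at hk hl
  have hakl := two_nsmul_pgen_sub_mem_of_disjoint hac (Ne.symm hk.1) (Ne.symm hl.1)
    (Ne.symm hk.2.2) (Ne.symm hl.2.2) hkl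
  have hbkl := two_nsmul_pgen_sub_mem_of_disjoint hbc (Ne.symm hk.2.1) (Ne.symm hl.2.1)
    (Ne.symm hk.2.2) (Ne.symm hl.2.2) hkl
  simpa using sub_mem hakl hbkl

theorem exists_pgen_add_add_mem (hn : 5 ≤ n) :
    ∃ t : Fin n → Sym2 (Fin n) → ℤ, ∀ i j, i ≠ j → pgen n i j + t i + t j ∈ Cgrp n := by
  let o : Fin n := ⟨0, by omega⟩
  let o' : Fin n := ⟨1, by omega⟩
  have hoo' : o' ≠ o := by simp [o, o', Fin.ext_iff]
  have ht_base : ∀ j, j ≠ o → pgen n j o + -(2 • pgen n o' o) + pgen n j o ∈ Cgrp n := by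
    intro j hj
    convert two_nsmul_pgen_sub_mem hn hj hoo' using 1
    abel
  refine ⟨fun i => if i = o then -(2 • pgen n o' o) else pgen n i o, fun i j hij => ?_⟩
  by_cases hi : i = o
  · have hj : j ≠ o := hi ▸ Ne.symm hij
    simpa [hi, hj, pgen_comm o j] using ht_base j hj
  by_cases hj : j = o
  · convert ht_base i hi using 1
    simp only [hi, hj, if_true, if_false]
    abel
  · simp only [hi, hj, if_false]
    convert triangle_mem hij hj hi using 1
    rw [pgen_comm j o]
    abel

theorem phi_add_two_nsmul_sum_mem {t : Fin n → Sym2 (Fin n) → ℤ}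
    (ht : ∀ i j, i ≠ j → pgen n i j + t i + t j ∈ Cgrp n) {σ : Perm (Fin n)}
    (hσ : ∀ i, σ i ≠ i) : phi n σ + 2 • ∑ i, t i ∈ Cgrp n := by
  have hsum : phi n σ + 2 • ∑ i, t i = ∑ i, (pgen n i (σ i) + t i + t (σ i)) := by
    rw [sum_add_distrib, sum_add_distrib, Equiv.sum_comp σ t, phi, two_nsmul]
    abel
  rw [hsum]
  exact sum_mem fun i _ => ht i (σ i) (hσ i).symm

theorem phi_sub_phi_mem (hn : 5 ≤ n) {σ₁ σ₂ : Perm (Fin n)} (h₁ : ∀ i, σ₁ i ≠ i)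
    (h₂ : ∀ i, σ₂ i ≠ i) : phi n σ₁ - phi n σ₂ ∈ Cgrp n := by
  obtain ⟨t, ht⟩ := exists_pgen_add_add_mem hn
  simpa using sub_mem (phi_add_two_nsmul_sum_mem ht h₁) (phi_add_two_nsmul_sum_mem ht h₂)

end Cgrp

/-- For `n ≥ 5`: (a) every derangement `σ` with at least two cycles admits a
derangement `σ̄` with one fewer cycle such that `φ(σ)·φ(σ̄)⁻¹ ∈ C_n`; (b) the
images under `φ` of any two derangements lie in the same coset of `C_n`. -/
theorem stmt_12 (n : ℕ) (hn : 5 ≤ n) :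
    (∀ σ : Equiv.Perm (Fin n), (∀ i, σ i ≠ i) → 2 ≤ Multiset.card σ.cycleType →
      ∃ σ' : Equiv.Perm (Fin n), (∀ i, σ' i ≠ i) ∧
        Multiset.card σ'.cycleType = Multiset.card σ.cycleType - 1 ∧
        phi n σ - phi n σ' ∈ Cgrp n) ∧
    (∀ σ₁ σ₂ : Equiv.Perm (Fin n), (∀ i, σ₁ i ≠ i) → (∀ i, σ₂ i ≠ i) →
      phi n σ₁ - phi n σ₂ ∈ Cgrp n) := by
  refine ⟨fun σ hσ hcard => ?_, fun σ₁ σ₂ h₁ h₂ => Cgrp.phi_sub_phi_mem hn h₁ h₂⟩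
  obtain ⟨τ, hτ, hτcard⟩ := Perm.exists_derangement_card_cycleType_eq_sub_one hσ hcard
  exact ⟨τ, hτ, hτcard, Cgrp.phi_sub_phi_mem hn hσ hτ⟩
end

section
/- Let n ≥ 3 be an integer divisible by 3 and let σ be a derangement of {1,…,n}.2Then φ(σ) ∈ C_n. -/
attribute [local instance] Classical.propDecidable

lemma pgen_swap (n : ℕ) (i j : Fin n) : pgen n i j = pgen n j i := by
  unfold pgen; rw [Sym2.eq_swap]

lemma rearr {Q : Type*} [AddCommGroup Q] (x y z : Q) (h : x + y + z = 0) :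
    y = -x - z := by
  have h2 : y = (x + y + z) - x - z := by abel
  rw [h] at h2; simpa using h2

lemma pick2 {n : ℕ} (hn : 6 ≤ n) (x y z : Fin n) :
    ∃ k l : Fin n, k ≠ l ∧ k ≠ x ∧ k ≠ y ∧ k ≠ z ∧ l ≠ x ∧ l ≠ y ∧ l ≠ z := by
  classical
  have hcard : ({x, y, z} : Finset (Fin n)).card ≤ 3 := by
    apply le_trans (Finset.card_insert_le _ _)
    apply Nat.succ_le_succ
    apply le_trans (Finset.card_insert_le _ _)
    simp
  have hc2 : 1 < (Finset.univ \ ({x, y, z} : Finset (Fin n))).card := by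
    rw [Finset.card_sdiff_of_subset (Finset.subset_univ _), Finset.card_univ, Fintype.card_fin]
    omega
  obtain ⟨k, hk, l, hl, hkl⟩ := Finset.one_lt_card.mp hc2
  simp only [Finset.mem_sdiff, Finset.mem_univ, Finset.mem_insert,
    Finset.mem_singleton, true_and, not_or] at hk hl
  exact ⟨k, l, hkl, hk.1, hk.2.1, hk.2.2, hl.1, hl.2.1, hl.2.2⟩

/-- If `n ≥ 3` is divisible by `3` and `σ` is a derangement of `{1,…,n}`,
then `φ(σ) ∈ C_n`. -/
theorem stmt_13 (n : ℕ) (hn : 3 ≤ n) (h3 : 3 ∣ n)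
    (σ : Equiv.Perm (Fin n)) (hσ : ∀ i, σ i ≠ i) :
    phi n σ ∈ Cgrp n := by
  classical
  by_cases hn3 : n = 3
  · subst hn3
    have key : (σ 0 = 1 ∧ σ 1 = 2 ∧ σ 2 = 0) ∨ (σ 0 = 2 ∧ σ 1 = 0 ∧ σ 2 = 1) := by
      have a0 := hσ 0; have a1 := hσ 1; have a2 := hσ 2
      have b01 : σ 0 ≠ σ 1 := σ.injective.ne (by decide)
      have b02 : σ 0 ≠ σ 2 := σ.injective.ne (by decide)
      have b12 : σ 1 ≠ σ 2 := σ.injective.ne (by decide)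
      revert a0 a1 a2 b01 b02 b12
      generalize σ 0 = x; generalize σ 1 = y; generalize σ 2 = z
      revert x y z; decide
    unfold phi
    rw [Fin.sum_univ_three]
    apply AddSubgroup.subset_closure
    rcases key with ⟨e0, e1, e2⟩ | ⟨e0, e1, e2⟩ <;> rw [e0, e1, e2]
    · exact ⟨0, 1, 2, by decide, by decide, by decide, by
        rw [pgen_swap 3 2 0]⟩
    · exact ⟨0, 1, 2, by decide, by decide, by decide, by
        rw [pgen_swap 3 1 0, pgen_swap 3 2 1]; abel⟩
  · have h6 : 6 ≤ n := by omega
    haveI : NeZero n := ⟨by omega⟩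
    set π := QuotientAddGroup.mk' (Cgrp n) with hπ
    rw [← QuotientAddGroup.eq_zero_iff (phi n σ)]
    have hT : ∀ i j k : Fin n, i ≠ j → j ≠ k → i ≠ k →
        π (pgen n i j) + π (pgen n j k) + π (pgen n i k) = 0 := by
      intro i j k hij hjk hik
      rw [← map_add, ← map_add]
      exact (QuotientAddGroup.eq_zero_iff _).mpr
        (AddSubgroup.subset_closure ⟨i, j, k, hij, hjk, hik, rfl⟩)
    set a : Fin n → _ := fun i => if i = 0 then 0 else π (pgen n 0 i) with haDef
    have ha0 : a 0 = 0 := by simp [haDef]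
    have haN : ∀ i, i ≠ 0 → a i = π (pgen n 0 i) := by
      intro i hi; simp [haDef, hi]
    have h1 : ∀ i j, i ≠ 0 → j ≠ 0 → i ≠ j → π (pgen n i j) = -a i - a j := by
      intro i j hi hj hij
      have h := hT 0 i j (Ne.symm hi) hij (Ne.symm hj)
      rw [haN i hi, haN j hj]
      exact rearr _ _ _ h
    have hR : ∀ i j k, i ≠ 0 → j ≠ 0 → k ≠ 0 → i ≠ j → j ≠ k → i ≠ k →
        (a i + a j + a k) + (a i + a j + a k) = 0 := by
      intro i j k hi hj hk hij hjk hik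
      have h := hT i j k hij hjk hik
      rw [h1 i j hi hj hij, h1 j k hj hk hjk, h1 i k hi hk hik] at h
      have h2 : (a i + a j + a k) + (a i + a j + a k)
          = -((-a i - a j) + (-a j - a k) + (-a i - a k)) := by abel
      rw [h2, h, neg_zero]
    set w : Fin n := ⟨1, by omega⟩ with hwDef
    have hw : w ≠ 0 := by
      simp [hwDef, Fin.ext_iff]
    have hK : ∀ i, i ≠ 0 → a i + a i = a w + a w := by
      intro i hi
      by_cases hiw : i = w
      · rw [hiw]
      · obtain ⟨k, l, hkl, hk0, hki, hkw, hl0, hli, hlw⟩ := pick2 h6 0 i w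
        have r1 := hR i k l hi hk0 hl0 (Ne.symm hki) hkl (Ne.symm hli)
        have r2 := hR w k l hw hk0 hl0 (Ne.symm hkw) hkl (Ne.symm hlw)
        have h2 : a i + a i = ((a i + a k + a l) + (a i + a k + a l))
            - ((a w + a k + a l) + (a w + a k + a l)) + (a w + a w) := by abel
        rw [r1, r2] at h2
        simpa using h2
    have h3c : (a w + a w) + (a w + a w) + (a w + a w) = 0 := by
      obtain ⟨k, l, hkl, hk0, hkw, _, hl0, hlw, _⟩ := pick2 h6 0 w w
      have r := hR w k l hw hk0 hl0 (Ne.symm hkw) hkl (Ne.symm hlw)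
      have e1 := hK k hk0
      have e2 := hK l hl0
      have h2 : (a w + a w) + (a k + a k) + (a l + a l)
          = ((a w + a k + a l) + (a w + a k + a l)) := by abel
      rw [e1, e2] at h2
      rw [h2, r]
    have hs0 : σ 0 ≠ 0 := hσ 0
    have ht0 : σ.symm 0 ≠ 0 := by
      intro h
      have h2 := congrArg σ h
      rw [Equiv.apply_symm_apply] at h2
      exact hσ 0 h2.symm
    have hpt : ∀ i : Fin n, π (pgen n i (σ i)) =
        (-a i - a (σ i)) + ((if i = 0 then a (σ 0) + a (σ 0) else 0)
          + (if σ i = 0 then a i + a i else 0)) := by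
      intro i
      by_cases hi : i = 0
      · subst hi
        rw [if_pos rfl, if_neg (hσ 0), haN (σ 0) (hσ 0), ha0]
        abel
      · by_cases hsi : σ i = 0
        · rw [if_neg hi, if_pos hsi, hsi, pgen_swap, haN i hi, ha0]
          abel
        · rw [if_neg hi, if_neg hsi, h1 i (σ i) hi hsi (Ne.symm (hσ i))]
          abel
    have hsum : π (phi n σ) =
        -(∑ i : Fin n, a i) - (∑ i : Fin n, a i)
          + ((a (σ 0) + a (σ 0)) + (a (σ.symm 0) + a (σ.symm 0))) := by
      unfold phi
      rw [map_sum]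
      rw [Finset.sum_congr rfl (fun i _ => hpt i)]
      rw [Finset.sum_add_distrib, Finset.sum_add_distrib, Finset.sum_sub_distrib]
      have e1 : ∑ i : Fin n, -a i = -(∑ i : Fin n, a i) := by
        rw [Finset.sum_neg_distrib]
      have e2 : ∑ i : Fin n, a (σ i) = ∑ i : Fin n, a i := Equiv.sum_comp σ a
      have e3 : (∑ i : Fin n, if i = 0 then a (σ 0) + a (σ 0) else 0)
          = a (σ 0) + a (σ 0) := by
        rw [Finset.sum_ite_eq' Finset.univ (0 : Fin n)
          (fun _ => a (σ 0) + a (σ 0))]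
        simp
      have e4 : (∑ i : Fin n, if σ i = 0 then a i + a i else 0)
          = a (σ.symm 0) + a (σ.symm 0) := by
        rw [Finset.sum_eq_single (σ.symm 0)]
        · rw [if_pos (Equiv.apply_symm_apply σ 0)]
        · intro b _ hb
          rw [if_neg]
          intro hb2
          exact hb (by rw [← hb2, Equiv.symm_apply_apply])
        · intro h; exact absurd (Finset.mem_univ _) h
      rw [e1, e2, e3, e4]
    have hSS : (∑ i : Fin n, a i) + (∑ i : Fin n, a i)
        = n • (a w + a w) - (a w + a w) := by
      rw [← Finset.sum_add_distrib]
      have e1 : ∀ i : Fin n, a i + a i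
          = (a w + a w) - (if i = 0 then a w + a w else 0) := by
        intro i
        by_cases hi : i = 0
        · rw [if_pos hi, hi, ha0]; abel
        · rw [if_neg hi, hK i hi]; abel
      rw [Finset.sum_congr rfl (fun i _ => e1 i)]
      rw [Finset.sum_sub_distrib, Finset.sum_const, Finset.card_univ,
        Fintype.card_fin]
      rw [Finset.sum_ite_eq' Finset.univ (0 : Fin n) (fun _ => a w + a w)]
      simp
    have hnc : n • (a w + a w) = 0 := by
      obtain ⟨q, hq⟩ := h3
      have hn' : n = q * 3 := by omega
      have e0 : n • (a w + a w) = (q * 3) • (a w + a w) :=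
        congrArg (fun m : ℕ => m • (a w + a w)) hn'
      rw [e0, mul_smul]
      have e : (3 : ℕ) • (a w + a w) = 0 := by
        rw [show (3 : ℕ) = 2 + 1 from rfl, succ_nsmul, two_nsmul]
        rw [← h3c]
      rw [e, smul_zero]
    show π (phi n σ) = 0
    rw [hsum, hK (σ 0) hs0, hK (σ.symm 0) ht0]
    have hfin : -(∑ i : Fin n, a i) - (∑ i : Fin n, a i)
        + ((a w + a w) + (a w + a w))
        = -((∑ i : Fin n, a i) + (∑ i : Fin n, a i))
          + ((a w + a w) + (a w + a w)) := by abel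
    rw [hfin, hSS, hnc]
    rw [show -(0 - (a w + a w)) + ((a w + a w) + (a w + a w))
        = (a w + a w) + (a w + a w) + (a w + a w) from by abel, h3c]
end

section
/- Let n > 2 be an odd integer with n ≡ 2 (mod 3). Then in G_n one has (∏_{1 ≤ i < j ≤ n} p_{i,j}) · (p_{1,3} p_{2,3} p_{2,4} p_{1,4})^{−1} ∈ C_n, i.e., the product of all generators p_{i,j} lies in the coset p_{1,3} p_{2,3} p_{2,4} p_{1,4} · C_n. -/
attribute [local instance] Classical.propDecidable

/-!
Modulo `C_n`, let `e i j` be the class of `p_{i,j}`; the generators of `C_n` say that `e` sums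
to zero around every triangle. Comparing four triangles on `a, b, c, d` shows that `2 e_{ab}`
does not depend on the pair once `n ≥ 5`; call it `t`. Doubling one triangle gives `3 t = 0`.
The triangles through the vertex `0` write `e_{ij} = -(g_i + g_j)` for a `g` with `2 g_i = t`
(at `0` itself, `g_0 = -t`), so the sum over all pairs is `-(n - 1) ∑ g = -((n - 1) / 2) n t`
while the 4-cycle is `-4 t`. For `n ≡ 5 (mod 6)` both are `-t`.
-/

def TriangleRelation {α A : Type*} [AddCommGroup A] (e : α → α → A) : Prop :=
  ∀ ⦃i j k⦄, i ≠ j → j ≠ k → i ≠ k → e i j + e j k + e i k = 0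

namespace TriangleRelation

variable {α A : Type*} [AddCommGroup A] {e : α → α → A}

theorem two_nsmul_eq_of_pairwise_ne (h : TriangleRelation e) {a b c d : α} (hab : a ≠ b)
    (hac : a ≠ c) (had : a ≠ d) (hbc : b ≠ c) (hbd : b ≠ d) (hcd : c ≠ d) :
    2 • e a b = 2 • e c d := by
  rw [← sub_eq_zero]
  calc 2 • e a b - 2 • e c d
      = (e a b + e b c + e a c) + (e a b + e b d + e a d)
        - (e a c + e c d + e a d) - (e b c + e c d + e b d) := by abel
    _ = 0 := by rw [h hab hbc hac, h hab hbd had, h hac hcd had, h hbc hcd hbd]; simp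

/-- Two pairs inside a set of at most three points are both disjoint from a pair outside it. -/
theorem two_nsmul_eq [Fintype α] (h : TriangleRelation e) (hα : 5 ≤ Fintype.card α)
    {s : Finset α} (hs : s.card ≤ 3) {a b c d : α} (ha : a ∈ s) (hb : b ∈ s) (hc : c ∈ s)
    (hd : d ∈ s) (hab : a ≠ b) (hcd : c ≠ d) : 2 • e a b = 2 • e c d := by
  obtain ⟨x, hx, y, hy, hxy⟩ :=
    (Finset.one_lt_card (s := sᶜ)).mp (by rw [Finset.card_compl]; omega)
  rw [Finset.mem_compl] at hx hy
  have hx' : ∀ z ∈ s, z ≠ x := fun z hz => ne_of_mem_of_not_mem hz hx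
  have hy' : ∀ z ∈ s, z ≠ y := fun z hz => ne_of_mem_of_not_mem hz hy
  rw [h.two_nsmul_eq_of_pairwise_ne hab (hx' a ha) (hy' a ha) (hx' b hb) (hy' b hb) hxy,
    h.two_nsmul_eq_of_pairwise_ne hcd (hx' c hc) (hy' c hc) (hx' d hd) (hy' d hd) hxy]

theorem three_nsmul_two_nsmul_eq_zero [Fintype α] (h : TriangleRelation e)
    (hα : 5 ≤ Fintype.card α) {a b c : α} (hab : a ≠ b) (hbc : b ≠ c) (hac : a ≠ c) :
    3 • (2 • e a b) = 0 := by
  have hbc' : 2 • e b c = 2 • e a b :=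
    h.two_nsmul_eq hα (s := {a, b, c}) Finset.card_le_three (by simp) (by simp) (by simp)
      (by simp) hbc hab
  have hac' : 2 • e a c = 2 • e a b :=
    h.two_nsmul_eq hα (s := {a, b, c}) Finset.card_le_three (by simp) (by simp) (by simp)
      (by simp) hac hab
  calc 3 • (2 • e a b) = 2 • (e a b + e b c + e a c) := by
        rw [smul_add, smul_add, hbc', hac']; abel
    _ = 0 := by rw [h hab hbc hac, smul_zero]

theorem exists_two_nsmul_eq_and_eq_neg_add [Fintype α] (h : TriangleRelation e)
    (hα : 5 ≤ Fintype.card α) {a b : α} (hab : a ≠ b) (h3 : 3 • (2 • e a b) = 0) :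
    ∃ g : α → A, (∀ i, 2 • g i = 2 • e a b) ∧
      ∀ i j, i ≠ j → j ≠ a → e i j = -(g i + g j) := by
  have ht : ∀ j ≠ a, 2 • e a j = 2 • e a b := fun j hj =>
    h.two_nsmul_eq hα (s := {a, b, j}) Finset.card_le_three (by simp) (by simp) (by simp)
      (by simp) hj.symm hab
  refine ⟨Function.update (e a) a (-(2 • e a b)), fun i => ?_, fun i j hij hj => ?_⟩
  · rcases eq_or_ne i a with rfl | hi
    · rw [Function.update_self, neg_nsmul, neg_eq_iff_add_eq_zero, ← succ_nsmul]
      exact h3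
    · rw [Function.update_of_ne hi, ht i hi]
  · rw [eq_neg_iff_add_eq_zero, Function.update_of_ne hj]
    rcases eq_or_ne i a with rfl | hi
    · rw [Function.update_self, ← ht j hj]
      abel
    · rw [Function.update_of_ne hi, ← h (Ne.symm hi) hij (Ne.symm hj)]
      abel

end TriangleRelation

section PairSums

variable {α : Type*} [Fintype α] [LinearOrder α] [DecidablePred fun q : α × α => q.1 < q.2]

theorem Finset.sum_filter_lt_add {M : Type*} [AddCommMonoid M] (g : α → M) :
    ∑ q ∈ univ.filter (fun q : α × α => q.1 < q.2), (g q.1 + g q.2)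
      = (Fintype.card α - 1) • ∑ i, g i := by
  have hswap : ∑ q ∈ univ.filter (fun q : α × α => q.1 < q.2), g q.2
      = ∑ q ∈ univ.filter (fun q : α × α => q.2 < q.1), g q.1 :=
    Finset.sum_equiv (Equiv.prodComm α α) (by simp) (by simp)
  rw [Finset.sum_add_distrib, hswap, Finset.sum_filter, Finset.sum_filter,
    ← Finset.sum_add_distrib, Finset.smul_sum, Fintype.sum_prod_type]
  refine Finset.sum_congr rfl fun i _ => ?_
  dsimp only
  rw [← Finset.sum_erase_add _ _ (Finset.mem_univ i)]
  simp only [lt_self_iff_false, if_false, add_zero]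
  calc _ = ∑ _ ∈ univ.erase i, g i := Finset.sum_congr rfl fun j hj => by
          rcases lt_or_gt_of_ne (Finset.ne_of_mem_erase hj).symm with h | h <;> simp [h, h.not_gt]
    _ = _ := by
      rw [Finset.sum_const, Finset.card_erase_of_mem (Finset.mem_univ i), Finset.card_univ]

theorem Finset.sum_filter_lt_eq_neg_nsmul {A : Type*} [AddCommGroup A] {e : α → α → A}
    {g : α → A} {t : A} {m : ℕ} (hα : Fintype.card α = 2 * m + 1)
    (he : ∀ i j, i < j → e i j = -(g i + g j)) (hg : ∀ i, 2 • g i = t) :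
    ∑ q ∈ univ.filter (fun q : α × α => q.1 < q.2), e q.1 q.2
      = -((m * Fintype.card α) • t) := by
  rw [Finset.sum_congr rfl fun q hq => he q.1 q.2 (Finset.mem_filter.mp hq).2,
    Finset.sum_neg_distrib, Finset.sum_filter_lt_add, show Fintype.card α - 1 = m * 2 by omega,
    mul_nsmul', ← Finset.sum_nsmul, Finset.sum_congr rfl fun i _ => hg i, Finset.sum_const,
    Finset.card_univ, mul_nsmul']

end PairSums

theorem triangleRelation_pgen (n : ℕ) :
    TriangleRelation fun i j => QuotientAddGroup.mk' (Cgrp n) (pgen n i j) := by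
  intro i j k hij hjk hik
  rw [← map_add, ← map_add, QuotientAddGroup.mk'_apply, QuotientAddGroup.eq_zero_iff]
  exact AddSubgroup.subset_closure ⟨i, j, k, hij, hjk, hik, rfl⟩

/-- For odd `n > 2` with `n ≡ 2 (mod 3)`, the product of all generators
`∏_{1 ≤ i < j ≤ n} p_{i,j}` lies in the coset `p_{1,3} p_{2,3} p_{2,4} p_{1,4} · C_n`
(written additively; `1,2,3,4` are the first four elements of `{1,…,n}`). -/
theorem stmt_14 (n : ℕ) (h2 : 2 < n) (hodd : Odd n) (hmod : n % 3 = 2) :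
    (∑ q ∈ Finset.univ.filter (fun q : Fin n × Fin n => q.1 < q.2), pgen n q.1 q.2)
      - (pgen n ⟨0, by omega⟩ ⟨2, by omega⟩ + pgen n ⟨1, by omega⟩ ⟨2, by omega⟩
          + pgen n ⟨1, by omega⟩ ⟨3, by omega⟩ + pgen n ⟨0, by omega⟩ ⟨3, by omega⟩)
      ∈ Cgrp n := by
  obtain ⟨m, hm⟩ := hodd
  have hα : 5 ≤ Fintype.card (Fin n) := by rw [Fintype.card_fin]; omega
  set e := fun i j => QuotientAddGroup.mk' (Cgrp n) (pgen n i j)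
  have he : TriangleRelation e := triangleRelation_pgen n
  set t := 2 • e ⟨0, by omega⟩ ⟨1, by omega⟩
  have h3t : 3 • t = 0 :=
    he.three_nsmul_two_nsmul_eq_zero hα (c := ⟨2, by omega⟩) (by simp) (by simp) (by simp)
  obtain ⟨g, hg, hpot⟩ := he.exists_two_nsmul_eq_and_eq_neg_add hα (by simp) h3t
  replace hg : ∀ i, 2 • g i = t := hg
  have hS := Finset.sum_filter_lt_eq_neg_nsmul (by rw [Fintype.card_fin, hm])
    (fun i j hij => hpot i j hij.ne fun hj => by simp [hj, Fin.lt_def] at hij) hg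
  have hX : e ⟨0, by omega⟩ ⟨2, by omega⟩ + e ⟨1, by omega⟩ ⟨2, by omega⟩
      + e ⟨1, by omega⟩ ⟨3, by omega⟩ + e ⟨0, by omega⟩ ⟨3, by omega⟩ = -(4 • t) := by
    rw [hpot _ _ (by simp) (by simp), hpot _ _ (by simp) (by simp), hpot _ _ (by simp) (by simp),
      hpot _ _ (by simp) (by simp)]
    calc _ = -(2 • g ⟨0, by omega⟩ + 2 • g ⟨1, by omega⟩ + 2 • g ⟨2, by omega⟩
          + 2 • g ⟨3, by omega⟩) := by abel
      _ = -(4 • t) := by rw [hg, hg, hg, hg]; abel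
  have hmn : (m * n) • t = 4 • t := by
    rw [nsmul_eq_mod_nsmul _ h3t, nsmul_eq_mod_nsmul 4 h3t, Nat.mul_mod, hmod,
      show m % 3 = 2 by omega]
  rw [← QuotientAddGroup.eq_zero_iff, ← QuotientAddGroup.mk'_apply, map_sub, map_sum, map_add,
    map_add, map_add, hS, Fintype.card_fin, hX, hmn]
  abel
end
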